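/- arXiv:2103.08021 — 3 statements merged into one kernel-verified Lean document; each statement's English description precedes it below -/
import Mathlib

section
/- Let E be a finite set, let M be a loopless matroid on E, let M₁,…,M_ℓ be matroids on E, and let a₁,…,a_ℓ be integers such that 1_{P(M)} = ∑_{i=1}^ℓ a_i·1_{P(M_i)} as functions on ℝ^E. Then 1_{P(M)} = ∑_{i : M_i loopless} a_i·1_{P(M_i)}; that is, the summands indexed by matroids with a loop may be discarded. The analogous statement holds with 'coloopless' (having no coloops) in place of 'loopless' throughout. -/
open Matroid
open scoped Classical

variable {α : Type*}

/-- The base polytope of a matroid `M` on a finite ground type: the convex hull in `ℝ^α` of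
the 0/1-indicator vectors of the bases of `M`. -/
noncomputable def basePolytope [Fintype α] (M : Matroid α) : Set (α → ℝ) :=
  convexHull ℝ {x | ∃ B, M.IsBase B ∧ x = fun i => if i ∈ B then (1 : ℝ) else 0}

universe u v

theorem sumLemma : ∀ (n : ℕ), ∀ (α : Type u) [Fintype α], Fintype.card α = n →
    ∀ {ι : Type v} (J : Finset ι) (K : ι → Set (α → ℝ)) (c : ι → ℤ),
    (∀ j ∈ J, (K j).Nonempty) → (∀ j ∈ J, IsCompact (K j)) → (∀ j ∈ J, Convex ℝ (K j)) →
    (∀ w : α → ℝ, ∑ j ∈ J, c j * Set.indicator (K j) (fun _ => (1:ℤ)) w = 0) →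
    ∑ j ∈ J, c j = 0 := by
  intro n
  induction n with
  | zero =>
    intro α _ hcard ι J K c hne _ _ hrel
    haveI : IsEmpty α := Fintype.card_eq_zero_iff.mp hcard
    have h0 := hrel (fun _ => 0)
    rw [← h0]
    refine Finset.sum_congr rfl fun j hj => ?_
    obtain ⟨y, hy⟩ := hne j hj
    have hy0 : (fun _ => (0:ℝ)) ∈ K j := by
      have he : (fun _ => (0:ℝ)) = y := Subsingleton.elim _ _
      rw [he]; exact hy
    rw [Set.indicator_of_mem hy0, mul_one]
  | succ n IH =>
    intro α _ hcard ι J K c hne hcpt hcvx hrel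
    have hpos : 0 < Fintype.card α := by omega
    haveI : Nonempty α := Fintype.card_pos_iff.mp hpos
    obtain ⟨a⟩ := ‹Nonempty α›
    set β := {b : α // b ≠ a} with hβ
    have hcardβ : Fintype.card β = n := by
      have h1 : Fintype.card {b : α // b = a} = 1 := Fintype.card_subtype_eq a
      have h2 : Fintype.card {b : α // ¬ (b = a)} = Fintype.card α - Fintype.card {b : α // b = a} :=
        Fintype.card_subtype_compl _
      have : Fintype.card β = Fintype.card {b : α // ¬ (b = a)} := rfl
      omega
    -- projection and embedding
    set π : (α → ℝ) → (β → ℝ) := fun x b => x b.1 with hπ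
    have hπcont : Continuous π := continuous_pi fun b => continuous_apply _
    have hπlin : IsLinearMap ℝ π := ⟨fun x y => rfl, fun r x => rfl⟩
    set emb : (β → ℝ) → ℝ → (α → ℝ) := fun y t b => if h : b = a then t else y ⟨b, h⟩ with hemb
    set slice : ι → ℝ → Set (β → ℝ) := fun j t => π '' (K j ∩ {x | x a = t}) with hslice
    have mem_slice : ∀ j t (y : β → ℝ), y ∈ slice j t ↔ emb y t ∈ K j := by
      intro j t y
      constructor
      · rintro ⟨x, ⟨hxK, hxa⟩, hπx⟩
        have : emb y t = x := by
          funext b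
          by_cases hb : b = a
          · subst hb; simp only [hemb, dif_pos rfl]; exact hxa.symm
          · simp only [hemb, dif_neg hb]
            have := congrFun hπx ⟨b, hb⟩
            exact this.symm ▸ rfl
        rw [this]; exact hxK
      · intro hK
        refine ⟨emb y t, ⟨hK, ?_⟩, ?_⟩
        · simp [hemb]
        · funext b
          simp only [hπ, hemb]
          rw [dif_neg b.2]
    have slice_cpt : ∀ j ∈ J, ∀ t, IsCompact (slice j t) := by
      intro j hj t
      refine ((hcpt j hj).inter_right ?_).image hπcont
      have : {x : α → ℝ | x a = t} = (fun x : α → ℝ => x a) ⁻¹' {t} := rfl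
      rw [this]
      exact IsClosed.preimage (continuous_apply a) isClosed_singleton
    have slice_cvx : ∀ j ∈ J, ∀ t, Convex ℝ (slice j t) := by
      intro j hj t
      refine Convex.is_linear_image ?_ hπlin
      refine (hcvx j hj).inter ?_
      intro x hx y hy σ τ hσ hτ hστ
      simp only [Set.mem_setOf_eq] at hx hy ⊢
      simp [hx, hy, ← add_mul, hστ]
    -- the coordinate image is an interval
    set m : ι → ℝ := fun j => sInf ((fun x : α → ℝ => x a) '' K j) with hm
    set Mx : ι → ℝ := fun j => sSup ((fun x : α → ℝ => x a) '' K j) with hMx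
    have himg : ∀ j ∈ J, (fun x : α → ℝ => x a) '' K j = Set.Icc (m j) (Mx j) := by
      intro j hj
      have hic : IsCompact ((fun x : α → ℝ => x a) '' K j) := (hcpt j hj).image (continuous_apply a)
      have hin : ((fun x : α → ℝ => x a) '' K j).Nonempty := (hne j hj).image _
      have hiv : Convex ℝ ((fun x : α → ℝ => x a) '' K j) :=
        Convex.is_linear_image (hcvx j hj) ⟨fun x y => rfl, fun r x => rfl⟩
      apply Set.Subset.antisymm
      · intro t ht
        exact ⟨csInf_le hic.bddBelow ht, le_csSup hic.bddAbove ht⟩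
      · have := hiv.ordConnected
        exact this.out (hic.sInf_mem hin) (hic.sSup_mem hin)
    have slice_ne : ∀ j ∈ J, ∀ t, ((slice j t).Nonempty ↔ t ∈ Set.Icc (m j) (Mx j)) := by
      intro j hj t
      rw [← himg j hj]
      constructor
      · rintro ⟨y, hy⟩
        rw [mem_slice] at hy
        exact ⟨emb y t, hy, by simp [hemb]⟩
      · rintro ⟨x, hx, hxa⟩
        exact ⟨π x, x, ⟨hx, hxa⟩, rfl⟩
    -- apply the induction hypothesis to each slice
    have hf : ∀ t : ℝ, ∑ j ∈ J.filter (fun j => m j ≤ t ∧ t ≤ Mx j), c j = 0 := by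
      intro t
      have := IH β hcardβ (J.filter (fun j => (slice j t).Nonempty)) (fun j => slice j t) c
        (fun j hj => (Finset.mem_filter.mp hj).2)
        (fun j hj => slice_cpt j (Finset.mem_filter.mp hj).1 t)
        (fun j hj => slice_cvx j (Finset.mem_filter.mp hj).1 t)
        (fun y => by
          rw [Finset.sum_filter_of_ne (by
            intro j hj hne0
            by_contra hcon
            apply hne0
            have : Set.indicator (slice j t) (fun _ => (1:ℤ)) y = 0 := by
              apply Set.indicator_of_notMem
              intro hmem
              exact hcon ⟨y, hmem⟩
            rw [this, mul_zero])]
          have : ∀ j, Set.indicator (slice j t) (fun _ => (1:ℤ)) y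
              = Set.indicator (K j) (fun _ => (1:ℤ)) (emb y t) := by
            intro j
            by_cases hmem : y ∈ slice j t
            · rw [Set.indicator_of_mem hmem, Set.indicator_of_mem ((mem_slice j t y).mp hmem)]
            · rw [Set.indicator_of_notMem hmem,
                Set.indicator_of_notMem (fun hc => hmem ((mem_slice j t y).mpr hc))]
          simp_rw [this]
          exact hrel (emb y t))
      rw [← this]
      apply Finset.sum_congr
      · apply Finset.filter_congr
        intro j hj
        rw [slice_ne j hj t]
        simp [Set.mem_Icc]
      · intros; rfl
    -- endpoint extraction
    set T : Finset ℝ := J.image Mx with hT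
    set V : Finset ℝ := J.image m ∪ J.image Mx with hV
    set S : Finset ℝ := (V.biUnion fun v => T.image fun s => v - s).filter (fun r => 0 < r) with hS
    set ε : ℝ := if h : S.Nonempty then S.min' h / 2 else 1 with hε
    have hεpos : 0 < ε := by
      rw [hε]
      split_ifs with h
      · have hm := S.min'_mem h
        have := (Finset.mem_filter.mp hm).2
        linarith
      · norm_num
    have hkey : ∀ v ∈ V, ∀ s ∈ T, s < v → s + ε < v := by
      intro v hv s hs hlt
      have hmem : v - s ∈ S := by
        rw [hS, Finset.mem_filter]
        exact ⟨Finset.mem_biUnion.mpr ⟨v, hv, Finset.mem_image.mpr ⟨s, hs, rfl⟩⟩, by linarith⟩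
      have hSne : S.Nonempty := ⟨_, hmem⟩
      have hminle : S.min' hSne ≤ v - s := Finset.min'_le _ _ hmem
      have hminpos : 0 < S.min' hSne := (Finset.mem_filter.mp (S.min'_mem hSne)).2
      rw [hε, dif_pos hSne]
      linarith
    have hsplit : ∀ j ∈ J, ∀ s ∈ T,
        ((if m j ≤ s ∧ s ≤ Mx j then c j else 0) - (if m j ≤ s + ε ∧ s + ε ≤ Mx j then c j else 0))
        = if Mx j = s then c j else 0 := by
      intro j hj s hs
      have hmV : m j ∈ V := Finset.mem_union_left _ (Finset.mem_image_of_mem m hj)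
      have hMV : Mx j ∈ V := Finset.mem_union_right _ (Finset.mem_image_of_mem Mx hj)
      have hmM : m j ≤ Mx j := by
        obtain ⟨x, hx⟩ := hne j hj
        have hxi : x a ∈ (fun x : α → ℝ => x a) '' K j := ⟨x, hx, rfl⟩
        rw [himg j hj] at hxi
        exact le_trans hxi.1 hxi.2
      rcases lt_trichotomy (Mx j) s with h | h | h
      · rw [if_neg (fun hc => absurd hc.2 (not_le.mpr h)),
          if_neg (fun hc => absurd hc.2 (not_le.mpr (by linarith))),
          if_neg (fun hc : Mx j = s => absurd hc (ne_of_lt h)), sub_zero]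
      · rw [if_pos ⟨by linarith, by linarith⟩,
          if_neg (fun hc => absurd hc.2 (not_le.mpr (by linarith))), if_pos h, sub_zero]
      · have hup : s + ε < Mx j := hkey (Mx j) hMV s hs h
        by_cases hlo : m j ≤ s
        · rw [if_pos ⟨hlo, le_of_lt h⟩, if_pos ⟨by linarith, le_of_lt hup⟩,
            if_neg (fun hc : Mx j = s => absurd hc (by intro hc; exact absurd hc (ne_of_gt h))), sub_self]
        · have hlo2 : s + ε < m j := hkey (m j) hmV s hs (not_le.mp hlo)
          rw [if_neg (fun hc => hlo hc.1), if_neg (fun hc => absurd hc.1 (not_le.mpr hlo2)),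
            if_neg (fun hc : Mx j = s => absurd hc (ne_of_gt h)), sub_self]
    have hfin : ∑ j ∈ J, c j = ∑ s ∈ T, ((∑ j ∈ J.filter (fun j => m j ≤ s ∧ s ≤ Mx j), c j)
        - ∑ j ∈ J.filter (fun j => m j ≤ s + ε ∧ s + ε ≤ Mx j), c j) := by
      simp_rw [Finset.sum_filter]
      simp_rw [← Finset.sum_sub_distrib]
      rw [Finset.sum_comm]
      refine Finset.sum_congr rfl fun j hj => ?_
      rw [Finset.sum_congr rfl (fun s hs => hsplit j hj s hs),
        Finset.sum_ite_eq T (Mx j) (fun _ => c j), if_pos (Finset.mem_image_of_mem Mx hj)]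
    rw [hfin]
    apply Finset.sum_eq_zero
    intro s _
    rw [hf s, hf (s + ε), sub_zero]

theorem masterLemma {α : Type u} [Fintype α] {ι : Type v} {κ : Type w} [Fintype κ]
    (J : Finset ι) (P : ι → Set (α → ℝ)) (c : ι → ℤ) (φ : κ → (α → ℝ) → ℝ)
    (hPc : ∀ j ∈ J, IsCompact (P j)) (hPx : ∀ j ∈ J, Convex ℝ (P j))
    (hφaff : ∀ k (u v : α → ℝ) (s : ℝ), φ k (u + s • (v - u)) = φ k u + s * (φ k v - φ k u))
    (hφcont : ∀ k, Continuous (φ k))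
    (hpos : ∀ j ∈ J, ∀ k, ∀ x ∈ P j, 0 ≤ φ k x)
    (hrel : ∀ x : α → ℝ, ∑ j ∈ J, c j * Set.indicator (P j) (fun _ => (1:ℤ)) x = 0) :
    ∀ x : α → ℝ, ∑ j ∈ J, (if ∀ k, ∃ p ∈ P j, φ k p ≠ 0
      then c j * Set.indicator (P j) (fun _ => (1:ℤ)) x else 0) = 0 := by
  have hbase : ∀ x : α → ℝ, (∀ k, φ k x ≠ 0) →
      ∑ j ∈ J, (if ∀ k, ∃ p ∈ P j, φ k p ≠ 0
        then c j * Set.indicator (P j) (fun _ => (1:ℤ)) x else 0) = 0 := by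
    intro x hx
    refine Eq.trans (Finset.sum_congr rfl fun j hj => ?_) (hrel x)
    by_cases hg : ∀ k, ∃ p ∈ P j, φ k p ≠ 0
    · rw [if_pos hg]
    · rw [if_neg hg]
      push_neg at hg
      obtain ⟨k, hk⟩ := hg
      have hxP : x ∉ P j := fun hxP => hx k (hk x hxP)
      rw [Set.indicator_of_notMem hxP, mul_zero]
  suffices h : ∀ (n : ℕ) (x : α → ℝ), (Finset.univ.filter (fun k => φ k x = 0)).card ≤ n →
      ∑ j ∈ J, (if ∀ k, ∃ p ∈ P j, φ k p ≠ 0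
        then c j * Set.indicator (P j) (fun _ => (1:ℤ)) x else 0) = 0 by
    intro x
    exact h _ x le_rfl
  intro n
  induction n with
  | zero =>
    intro x hx
    refine hbase x fun k hk => ?_
    have : k ∈ Finset.univ.filter (fun k => φ k x = 0) := Finset.mem_filter.mpr ⟨Finset.mem_univ k, hk⟩
    have := Finset.card_pos.mpr ⟨k, this⟩
    omega
  | succ n IH =>
    intro x hxcard
    by_cases hK0 : ∀ k, φ k x ≠ 0
    · exact hbase x hK0
    push_neg at hK0
    obtain ⟨k0, hk0⟩ := hK0
    set J' : Finset ι := J.filter (fun j => (∀ k, ∃ p ∈ P j, φ k p ≠ 0) ∧ x ∈ P j) with hJ'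
    by_cases hJ'ne : J'.Nonempty
    swap
    · refine Finset.sum_eq_zero fun j hj => ?_
      by_cases hg : ∀ k, ∃ p ∈ P j, φ k p ≠ 0
      · rw [if_pos hg]
        have hxP : x ∉ P j := fun hxP => hJ'ne ⟨j, Finset.mem_filter.mpr ⟨hj, hg, hxP⟩⟩
        rw [Set.indicator_of_notMem hxP, mul_zero]
      · rw [if_neg hg]
    -- find a ball around x controlling signs and membership
    have h1 : ∀ᶠ y in nhds x, ∀ k, φ k x ≠ 0 → φ k y ≠ 0 := by
      rw [Filter.eventually_all]
      intro k
      by_cases hk : φ k x = 0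
      · filter_upwards with y hy; exact absurd hk hy
      · filter_upwards [(hφcont k).continuousAt.eventually_ne hk] with y hy _
        exact hy
    have h2 : ∀ᶠ y in nhds x, ∀ j ∈ J, x ∉ P j → y ∉ P j := by
      rw [Filter.eventually_all_finset]
      intro j hj
      by_cases hxP : x ∈ P j
      · filter_upwards with y hy; exact absurd hxP hy
      · have hop : IsOpen (P j)ᶜ := ((hPc j hj).isClosed).isOpen_compl
        filter_upwards [hop.eventually_mem hxP] with y hy _
        exact hy
    obtain ⟨ε, hεpos, hεball⟩ := Metric.eventually_nhds_iff.mp (h1.and h2)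
    set ρ : ℝ := ε / 2 with hρ
    have hρpos : 0 < ρ := by positivity
    have hρε : ρ < ε := by rw [hρ]; linarith
    -- choice of witness points with positive φ k0 value
    have hp : ∀ j ∈ J', ∃ p, p ∈ P j ∧ 0 < φ k0 p := by
      intro j hj
      obtain ⟨hjJ, hgood, _⟩ := Finset.mem_filter.mp hj
      obtain ⟨p, hpP, hpne⟩ := hgood k0
      exact ⟨p, hpP, lt_of_le_of_ne (hpos j hjJ k0 p hpP) (Ne.symm hpne)⟩
    set g : ι → ℝ := fun j => if h : ∃ p, p ∈ P j ∧ 0 < φ k0 p then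
        min (φ k0 h.choose) (φ k0 h.choose * ρ / (dist h.choose x + 1)) else 1 with hg
    have hgpos : ∀ j ∈ J', 0 < g j := by
      intro j hj
      have hpj := hp j hj
      rw [hg]
      simp only [dif_pos hpj]
      have h1 := hpj.choose_spec.2
      have hd : (0:ℝ) ≤ dist hpj.choose x := dist_nonneg
      apply lt_min h1
      positivity
    obtain ⟨jm, hjm, hjmin⟩ := Finset.exists_min_image J' g hJ'ne
    set t : ℝ := g jm with htdef
    have htpos : 0 < t := hgpos jm hjm
    -- slice sets
    set K' : ι → Set (α → ℝ) := fun j => P j ∩ {y | φ k0 y = t} ∩ Metric.closedBall x ρ with hK'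
    have hwitness : ∀ j ∈ J', ∃ q, q ∈ K' j := by
      intro j hj
      have hpj := hp j hj
      obtain ⟨hjJ, hgood, hxP⟩ := Finset.mem_filter.mp hj
      set p : α → ℝ := hpj.choose with hpdef
      obtain ⟨hpP, hφp⟩ := hpj.choose_spec
      set d : ℝ := dist p x with hd
      have hd0 : 0 ≤ d := dist_nonneg
      have hgj : g j = min (φ k0 p) (φ k0 p * ρ / (d + 1)) := by
        rw [hg]; simp only [dif_pos hpj]; rfl
      have htle : t ≤ g j := hjmin j hj
      set s : ℝ := t / φ k0 p with hs
      have hs0 : 0 ≤ s := le_of_lt (by positivity)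
      have hs1 : s ≤ 1 := by
        rw [hs, div_le_one hφp]
        calc t ≤ g j := htle
        _ ≤ φ k0 p := by rw [hgj]; exact min_le_left _ _
      have hsρ : s * d ≤ ρ := by
        have h2 : t ≤ φ k0 p * ρ / (d + 1) := le_trans htle (by rw [hgj]; exact min_le_right _ _)
        rw [hs]
        rw [div_mul_eq_mul_div, div_le_iff₀ hφp]
        have h3 : t * (d + 1) ≤ φ k0 p * ρ := by
          have := (le_div_iff₀ (by linarith : (0:ℝ) < d + 1)).mp h2
          linarith
        nlinarith
      refine ⟨x + s • (p - x), ⟨?_, ?_⟩, ?_⟩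
      · have heq : x + s • (p - x) = (1 - s) • x + s • p := by
          rw [smul_sub, sub_smul, one_smul]; abel
        rw [heq]
        exact hPx j hjJ hxP hpP (by linarith) hs0 (by ring)
      · show φ k0 (x + s • (p - x)) = t
        rw [hφaff k0 x p s, hk0, hs]
        field_simp
        have hne : φ k0 p ≠ 0 := ne_of_gt hφp
        rw [zero_add, sub_zero, mul_div_assoc, div_self hne, mul_one]
      · rw [Metric.mem_closedBall]
        have : dist (x + s • (p - x)) x = s * d := by
          rw [dist_eq_norm, add_sub_cancel_left, norm_smul, Real.norm_of_nonneg hs0, hd,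
            dist_eq_norm]
        rw [this]
        exact hsρ
    -- the global relation for the slice sets
    have hrel' : ∀ w : α → ℝ, ∑ j ∈ J', c j * Set.indicator (K' j) (fun _ => (1:ℤ)) w = 0 := by
      intro w
      by_cases hw : φ k0 w = t ∧ w ∈ Metric.closedBall x ρ
      swap
      · refine Finset.sum_eq_zero fun j hj => ?_
        have : w ∉ K' j := by
          rintro ⟨⟨_, hw1⟩, hw2⟩
          exact hw ⟨hw1, hw2⟩
        rw [Set.indicator_of_notMem this, mul_zero]
      · obtain ⟨hwt, hwball⟩ := hw
        have hwd : dist w x < ε := lt_of_le_of_lt (Metric.mem_closedBall.mp hwball) hρε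
        obtain ⟨hW1, hW2⟩ := hεball hwd
        have hwt0 : φ k0 w ≠ 0 := by rw [hwt]; exact ne_of_gt htpos
        -- the zero set at w is strictly smaller
        have hsub : Finset.univ.filter (fun k => φ k w = 0) ⊆
            (Finset.univ.filter (fun k => φ k x = 0)).erase k0 := by
          intro k hk
          have hkw : φ k w = 0 := (Finset.mem_filter.mp hk).2
          refine Finset.mem_erase.mpr ⟨?_, Finset.mem_filter.mpr ⟨Finset.mem_univ k, ?_⟩⟩
          · rintro rfl; exact hwt0 hkw
          · by_contra hne
            exact hW1 k hne hkw
        have hk0mem : k0 ∈ Finset.univ.filter (fun k => φ k x = 0) :=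
          Finset.mem_filter.mpr ⟨Finset.mem_univ k0, hk0⟩
        have hcard : (Finset.univ.filter (fun k => φ k w = 0)).card ≤ n := by
          have := Finset.card_le_card hsub
          rw [Finset.card_erase_of_mem hk0mem] at this
          omega
        have hIH := IH w hcard
        have hstep : ∑ j ∈ J', c j * Set.indicator (P j) (fun _ => (1:ℤ)) w = 0 := by
          calc ∑ j ∈ J', c j * Set.indicator (P j) (fun _ => (1:ℤ)) w
              = ∑ j ∈ J', (if ∀ k, ∃ p ∈ P j, φ k p ≠ 0
                  then c j * Set.indicator (P j) (fun _ => (1:ℤ)) w else 0) := by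
                refine Finset.sum_congr rfl fun j hj => ?_
                rw [if_pos (Finset.mem_filter.mp hj).2.1]
            _ = ∑ j ∈ J, (if ∀ k, ∃ p ∈ P j, φ k p ≠ 0
                  then c j * Set.indicator (P j) (fun _ => (1:ℤ)) w else 0) := by
                refine Finset.sum_subset (Finset.filter_subset _ _) fun j hj hj' => ?_
                by_cases hg : ∀ k, ∃ p ∈ P j, φ k p ≠ 0
                · rw [if_pos hg]
                  have hxP : x ∉ P j := fun hxP => hj' (Finset.mem_filter.mpr ⟨hj, hg, hxP⟩)
                  rw [Set.indicator_of_notMem (hW2 j hj hxP), mul_zero]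
                · rw [if_neg hg]
            _ = 0 := hIH
        refine Eq.trans (Finset.sum_congr rfl fun j hj => ?_) hstep
        congr 1
        by_cases hmem : w ∈ P j
        · have hwK : w ∈ K' j := by rw [hK']; exact ⟨⟨hmem, hwt⟩, hwball⟩
          rw [Set.indicator_of_mem hmem, Set.indicator_of_mem hwK]
        · have hwK : w ∉ K' j := by rw [hK']; exact fun hc => hmem hc.1.1
          rw [Set.indicator_of_notMem hmem, Set.indicator_of_notMem hwK]
    -- apply the sum lemma
    have hsum0 : ∑ j ∈ J', c j = 0 := by
      refine sumLemma (Fintype.card α) α rfl J' K' c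
        (fun j hj => hwitness j hj)
        (fun j hj => ?_) (fun j hj => ?_) hrel'
      · have hjJ := (Finset.mem_filter.mp hj).1
        refine ((hPc j hjJ).inter_right ?_).inter_right Metric.isClosed_closedBall
        exact IsClosed.preimage (hφcont k0) isClosed_singleton
      · have hjJ := (Finset.mem_filter.mp hj).1
        refine ((hPx j hjJ).inter ?_).inter (convex_closedBall x ρ)
        intro u hu v hv σ τ hσ hτ hστ
        have heq : σ • u + τ • v = u + τ • (v - u) := by
          rw [smul_sub]
          have : σ = 1 - τ := by linarith
          rw [this, sub_smul, one_smul]; abel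
        show φ k0 (σ • u + τ • v) = t
        rw [heq, hφaff k0 u v τ, Set.mem_setOf_eq.mp hu, Set.mem_setOf_eq.mp hv]
        ring
    -- conclude
    calc ∑ j ∈ J, (if ∀ k, ∃ p ∈ P j, φ k p ≠ 0
          then c j * Set.indicator (P j) (fun _ => (1:ℤ)) x else 0)
        = ∑ j ∈ J', (if ∀ k, ∃ p ∈ P j, φ k p ≠ 0
          then c j * Set.indicator (P j) (fun _ => (1:ℤ)) x else 0) := by
          refine (Finset.sum_subset (Finset.filter_subset _ _) fun j hj hj' => ?_).symm
          by_cases hg : ∀ k, ∃ p ∈ P j, φ k p ≠ 0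
          · rw [if_pos hg]
            have hxP : x ∉ P j := fun hxP => hj' (Finset.mem_filter.mpr ⟨hj, hg, hxP⟩)
            rw [Set.indicator_of_notMem hxP, mul_zero]
          · rw [if_neg hg]
      _ = ∑ j ∈ J', c j := by
          refine Finset.sum_congr rfl fun j hj => ?_
          obtain ⟨hjJ, hg, hxP⟩ := Finset.mem_filter.mp hj
          rw [if_pos hg, Set.indicator_of_mem hxP, mul_one]
      _ = 0 := hsum0

open Matroid

section Application

variable [Fintype α]

theorem bp_finite (M : Matroid α) :
    {x : α → ℝ | ∃ B, M.IsBase B ∧ x = fun i => if i ∈ B then (1 : ℝ) else 0}.Finite := by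
  refine Set.Finite.subset (Set.Finite.pi (fun _ : α => (Set.finite_singleton (0:ℝ)).insert 1)) ?_
  rintro x ⟨B, _, rfl⟩
  intro i _
  by_cases h : i ∈ B <;> simp [h]

theorem bp_compact (M : Matroid α) : IsCompact (basePolytope M) :=
  (bp_finite M).isCompact_convexHull ℝ

theorem bp_convex (M : Matroid α) : Convex ℝ (basePolytope M) :=
  convex_convexHull ℝ _

theorem bp_nonneg (M : Matroid α) (e : α) : ∀ x ∈ basePolytope M, 0 ≤ x e := by
  intro x hx
  have hsub : basePolytope M ⊆ {x : α → ℝ | 0 ≤ x e} := by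
    apply convexHull_min
    · rintro y ⟨B, _, rfl⟩
      by_cases h : e ∈ B <;> simp [h]
    · intro u hu v hv σ τ hσ hτ hστ
      simp only [Set.mem_setOf_eq] at hu hv ⊢
      have : (σ • u + τ • v) e = σ * u e + τ * v e := rfl
      rw [this]
      nlinarith
  exact hsub hx

theorem bp_le_one (M : Matroid α) (e : α) : ∀ x ∈ basePolytope M, x e ≤ 1 := by
  intro x hx
  have hsub : basePolytope M ⊆ {x : α → ℝ | x e ≤ 1} := by
    apply convexHull_min
    · rintro y ⟨B, _, rfl⟩
      by_cases h : e ∈ B <;> simp [h]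
    · intro u hu v hv σ τ hσ hτ hστ
      simp only [Set.mem_setOf_eq] at hu hv ⊢
      have : (σ • u + τ • v) e = σ * u e + τ * v e := rfl
      rw [this]
      nlinarith
  exact hsub hx

theorem bp_const (M : Matroid α) (e : α) (r : ℝ)
    (h : ∀ B, M.IsBase B → (if e ∈ B then (1:ℝ) else 0) = r) :
    ∀ x ∈ basePolytope M, x e = r := by
  intro x hx
  have hsub : basePolytope M ⊆ {x : α → ℝ | x e = r} := by
    apply convexHull_min
    · rintro y ⟨B, hB, rfl⟩
      exact h B hB
    · intro u hu v hv σ τ hσ hτ hστ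
      simp only [Set.mem_setOf_eq] at hu hv ⊢
      have : (σ • u + τ • v) e = σ * u e + τ * v e := rfl
      rw [this, hu, hv, ← add_mul, hστ, one_mul]
  exact hsub hx

theorem bp_loop_equiv (M : Matroid α) (e : α) :
    (∃ B, M.IsBase B ∧ e ∈ B) ↔ ∃ p ∈ basePolytope M, p e ≠ 0 := by
  constructor
  · rintro ⟨B, hB, heB⟩
    refine ⟨_, subset_convexHull ℝ _ ⟨B, hB, rfl⟩, ?_⟩
    simp [heB]
  · rintro ⟨p, hp, hpe⟩
    by_contra hcon
    push_neg at hcon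
    refine hpe (bp_const M e 0 (fun B hB => ?_) p hp)
    rw [if_neg (hcon B hB)]

theorem bp_coloop_equiv (M : Matroid α) (e : α) :
    (∃ B, M.IsBase B ∧ e ∉ B) ↔ ∃ p ∈ basePolytope M, (1:ℝ) - p e ≠ 0 := by
  constructor
  · rintro ⟨B, hB, heB⟩
    refine ⟨_, subset_convexHull ℝ _ ⟨B, hB, rfl⟩, ?_⟩
    simp [heB]
  · rintro ⟨p, hp, hpe⟩
    by_contra hcon
    push_neg at hcon
    refine hpe ?_
    rw [bp_const M e 1 (fun B hB => by rw [if_pos (hcon B hB)]) p hp]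
    ring

end Application

/-- If the indicator function of the base polytope of a loopless matroid `M` is an integer
combination of indicator functions of base polytopes of matroids `Mᵢ` on the same ground set,
then the summands indexed by matroids with a loop may be discarded; the analogous statement
holds with "coloopless"/"coloop" in place of "loopless"/"loop". -/
theorem stmt17 [Fintype α] (M : Matroid α) (ℓ : ℕ) (Ms : Fin ℓ → Matroid α)
    (hE : ∀ i, (Ms i).E = M.E) (a : Fin ℓ → ℤ)
    (hval : ∀ x : α → ℝ, Set.indicator (basePolytope M) (fun _ => (1 : ℤ)) x
      = ∑ i, a i * Set.indicator (basePolytope (Ms i)) (fun _ => (1 : ℤ)) x) :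
    ((∀ e ∈ M.E, ∃ B, M.IsBase B ∧ e ∈ B) →
      ∀ x : α → ℝ, Set.indicator (basePolytope M) (fun _ => (1 : ℤ)) x
        = ∑ i, (if ∀ e ∈ (Ms i).E, ∃ B, (Ms i).IsBase B ∧ e ∈ B
            then a i * Set.indicator (basePolytope (Ms i)) (fun _ => (1 : ℤ)) x else 0)) ∧
    ((∀ e ∈ M.E, ∃ B, M.IsBase B ∧ e ∉ B) →
      ∀ x : α → ℝ, Set.indicator (basePolytope M) (fun _ => (1 : ℤ)) x
        = ∑ i, (if ∀ e ∈ (Ms i).E, ∃ B, (Ms i).IsBase B ∧ e ∉ B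
            then a i * Set.indicator (basePolytope (Ms i)) (fun _ => (1 : ℤ)) x else 0)) := by
  set Pf : Option (Fin ℓ) → Set (α → ℝ) :=
    fun j => j.elim (basePolytope M) (fun i => basePolytope (Ms i)) with hPf
  set cf : Option (Fin ℓ) → ℤ := fun j => j.elim 1 (fun i => -a i) with hcf
  have hrel : ∀ y : α → ℝ,
      ∑ j ∈ Finset.univ, cf j * Set.indicator (Pf j) (fun _ => (1:ℤ)) y = 0 := by
    intro y
    have h := hval y
    have hgoal : (1:ℤ) * Set.indicator (basePolytope M) (fun _ => (1:ℤ)) y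
        + ∑ i : Fin ℓ, (-a i) * Set.indicator (basePolytope (Ms i)) (fun _ => (1:ℤ)) y = 0 := by
      simp only [neg_mul]
      rw [one_mul, h, ← Finset.sum_add_distrib]
      exact Finset.sum_eq_zero fun i _ => by ring
    calc ∑ j ∈ Finset.univ, cf j * Set.indicator (Pf j) (fun _ => (1:ℤ)) y
        = cf none * Set.indicator (Pf none) (fun _ => (1:ℤ)) y
          + ∑ i : Fin ℓ, cf (some i) * Set.indicator (Pf (some i)) (fun _ => (1:ℤ)) y :=
          Fintype.sum_option _
      _ = 0 := hgoal
  have hcompact : ∀ j ∈ (Finset.univ : Finset (Option (Fin ℓ))), IsCompact (Pf j) := by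
    intro j _; cases j
    · exact bp_compact M
    · exact bp_compact _
  have hconvex : ∀ j ∈ (Finset.univ : Finset (Option (Fin ℓ))), Convex ℝ (Pf j) := by
    intro j _; cases j
    · exact bp_convex M
    · exact bp_convex _
  constructor
  -- loops
  · intro hM x
    set φf : {e : α // e ∈ M.E} → (α → ℝ) → ℝ := fun k y => y k.1 with hφf
    have hmaster := masterLemma Finset.univ Pf cf φf hcompact hconvex
      (fun k u v s => by
        show (u + s • (v - u)) k.1 = u k.1 + s * (v k.1 - u k.1)
        simp only [Pi.add_apply, Pi.smul_apply, Pi.sub_apply, smul_eq_mul])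
      (fun k => continuous_apply k.1)
      (fun j _ k y hy => by
        cases j
        · exact bp_nonneg M k.1 y hy
        · exact bp_nonneg _ k.1 y hy)
      hrel x
    have hMgood : ∀ k : {e : α // e ∈ M.E}, ∃ p ∈ Pf none, φf k p ≠ 0 :=
      fun k => (bp_loop_equiv M k.1).mp (hM k.1 k.2)
    have hiff : ∀ i : Fin ℓ,
        (∀ k : {e : α // e ∈ M.E}, ∃ p ∈ Pf (some i), φf k p ≠ 0)
        ↔ (∀ e ∈ (Ms i).E, ∃ B, (Ms i).IsBase B ∧ e ∈ B) := by
      intro i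
      rw [hE i]
      constructor
      · intro h e he
        exact (bp_loop_equiv (Ms i) e).mpr (h ⟨e, he⟩)
      · intro h k
        exact (bp_loop_equiv (Ms i) k.1).mp (h k.1 k.2)
    have hsum : (∑ i : Fin ℓ, if (∀ k : {e : α // e ∈ M.E}, ∃ p ∈ Pf (some i), φf k p ≠ 0)
          then cf (some i) * Set.indicator (Pf (some i)) (fun _ => (1:ℤ)) x else 0)
        = ∑ i : Fin ℓ, -(if (∀ e ∈ (Ms i).E, ∃ B, (Ms i).IsBase B ∧ e ∈ B)
          then a i * Set.indicator (basePolytope (Ms i)) (fun _ => (1:ℤ)) x else 0) := by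
      refine Finset.sum_congr rfl fun i _ => ?_
      by_cases hc : ∀ e ∈ (Ms i).E, ∃ B, (Ms i).IsBase B ∧ e ∈ B
      · rw [if_pos ((hiff i).mpr hc), if_pos hc,
          show cf (some i) = -a i from rfl, neg_mul]
        rfl
      · rw [if_neg (fun hh => hc ((hiff i).mp hh)), if_neg hc, neg_zero]
    have hm2 : (if (∀ k : {e : α // e ∈ M.E}, ∃ p ∈ Pf none, φf k p ≠ 0)
          then cf none * Set.indicator (Pf none) (fun _ => (1:ℤ)) x else 0)
        + (∑ i : Fin ℓ, if (∀ k : {e : α // e ∈ M.E}, ∃ p ∈ Pf (some i), φf k p ≠ 0)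
          then cf (some i) * Set.indicator (Pf (some i)) (fun _ => (1:ℤ)) x else 0) = 0 :=
      (Fintype.sum_option _).symm.trans hmaster
    rw [if_pos hMgood, hsum, Finset.sum_neg_distrib,
      show cf none = 1 from rfl, show Pf none = basePolytope M from rfl, one_mul] at hm2
    have hfinal := eq_of_sub_eq_zero (by linarith [hm2] :
      Set.indicator (basePolytope M) (fun _ => (1:ℤ)) x
        - (∑ i : Fin ℓ, if (∀ e ∈ (Ms i).E, ∃ B, (Ms i).IsBase B ∧ e ∈ B)
          then a i * Set.indicator (basePolytope (Ms i)) (fun _ => (1:ℤ)) x else 0) = 0)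
    exact hfinal
  -- coloops
  · intro hM x
    set φf : {e : α // e ∈ M.E} → (α → ℝ) → ℝ := fun k y => 1 - y k.1 with hφf
    have hmaster := masterLemma Finset.univ Pf cf φf hcompact hconvex
      (fun k u v s => by
        show 1 - (u + s • (v - u)) k.1 = (1 - u k.1) + s * ((1 - v k.1) - (1 - u k.1))
        simp only [Pi.add_apply, Pi.smul_apply, Pi.sub_apply, smul_eq_mul]
        ring)
      (fun k => continuous_const.sub (continuous_apply k.1))
      (fun j _ k y hy => by
        cases j with
        | none =>
          have := bp_le_one M k.1 y hy
          show 0 ≤ 1 - y k.1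
          linarith
        | some i =>
          have := bp_le_one (Ms i) k.1 y hy
          show 0 ≤ 1 - y k.1
          linarith)
      hrel x
    have hMgood : ∀ k : {e : α // e ∈ M.E}, ∃ p ∈ Pf none, φf k p ≠ 0 :=
      fun k => (bp_coloop_equiv M k.1).mp (hM k.1 k.2)
    have hiff : ∀ i : Fin ℓ,
        (∀ k : {e : α // e ∈ M.E}, ∃ p ∈ Pf (some i), φf k p ≠ 0)
        ↔ (∀ e ∈ (Ms i).E, ∃ B, (Ms i).IsBase B ∧ e ∉ B) := by
      intro i
      rw [hE i]
      constructor
      · intro h e he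
        exact (bp_coloop_equiv (Ms i) e).mpr (h ⟨e, he⟩)
      · intro h k
        exact (bp_coloop_equiv (Ms i) k.1).mp (h k.1 k.2)
    have hsum : (∑ i : Fin ℓ, if (∀ k : {e : α // e ∈ M.E}, ∃ p ∈ Pf (some i), φf k p ≠ 0)
          then cf (some i) * Set.indicator (Pf (some i)) (fun _ => (1:ℤ)) x else 0)
        = ∑ i : Fin ℓ, -(if (∀ e ∈ (Ms i).E, ∃ B, (Ms i).IsBase B ∧ e ∉ B)
          then a i * Set.indicator (basePolytope (Ms i)) (fun _ => (1:ℤ)) x else 0) := by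
      refine Finset.sum_congr rfl fun i _ => ?_
      by_cases hc : ∀ e ∈ (Ms i).E, ∃ B, (Ms i).IsBase B ∧ e ∉ B
      · rw [if_pos ((hiff i).mpr hc), if_pos hc,
          show cf (some i) = -a i from rfl, neg_mul]
        rfl
      · rw [if_neg (fun hh => hc ((hiff i).mp hh)), if_neg hc, neg_zero]
    have hm2 : (if (∀ k : {e : α // e ∈ M.E}, ∃ p ∈ Pf none, φf k p ≠ 0)
          then cf none * Set.indicator (Pf none) (fun _ => (1:ℤ)) x else 0)
        + (∑ i : Fin ℓ, if (∀ k : {e : α // e ∈ M.E}, ∃ p ∈ Pf (some i), φf k p ≠ 0)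
          then cf (some i) * Set.indicator (Pf (some i)) (fun _ => (1:ℤ)) x else 0) = 0 :=
      (Fintype.sum_option _).symm.trans hmaster
    rw [if_pos hMgood, hsum, Finset.sum_neg_distrib,
      show cf none = 1 from rfl, show Pf none = basePolytope M from rfl, one_mul] at hm2
    have hfinal := eq_of_sub_eq_zero (by linarith [hm2] :
      Set.indicator (basePolytope M) (fun _ => (1:ℤ)) x
        - (∑ i : Fin ℓ, if (∀ e ∈ (Ms i).E, ∃ B, (Ms i).IsBase B ∧ e ∉ B)
          then a i * Set.indicator (basePolytope (Ms i)) (fun _ => (1:ℤ)) x else 0) = 0)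
    exact hfinal
end

section
/- Fix n ≥ 0 and E = {0,…,n}. Let R_K be the subring of the product ∏_{σ ∈ Sym(E)} ℤ[T₀^{±1},…,T_n^{±1}] consisting of the tuples (f_σ) such that for every permutation σ of E and every 0 ≤ i ≤ n−1, the difference f_σ − f_{σ∘(i,i+1)} lies in the ideal generated by T_{σ(i)} − T_{σ(i+1)}, where (i,i+1) is the adjacent transposition. Let R_A be the subring of ∏_{σ ∈ Sym(E)} ℤ[t₀,…,t_n] consisting of the tuples (φ_σ) such that φ_σ − φ_{σ∘(i,i+1)} lies in the ideal generated by t_{σ(i)} − t_{σ(i+1)} for all σ and i. Let I_K ⊆ R_K be the ideal generated by the constant tuples (f,…,f) − (f(1,…,1),…,f(1,…,1)) as f ranges over all Laurent polynomials, and let I_A ⊆ R_A be the ideal generated by the constant tuples (φ,…,φ) − (φ(0,…,0),…,φ(0,…,0)) as φ ranges over all polynomials. Then there exists a ring isomorphism ζ : R_K/I_K → R_A/I_A such that whenever every entry of a tuple (f_σ) ∈ R_K is an ordinary polynomial in T₀,…,T_n, ζ sends the class of (f_σ) to the class of the tuple (f_σ(t₀+1,…,t_n+1)). -/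
/-- The ring of Laurent polynomials `ℤ[T₀^{±1}, …, T_n^{±1}]`, realized as the group algebra
of the lattice of exponent vectors. -/
abbrev LaurentRing (n : ℕ) : Type := AddMonoidAlgebra ℤ (Fin (n + 1) → ℤ)

/-- The Laurent monomial `Tᵢ`. -/
noncomputable def Tvar (n : ℕ) (i : Fin (n + 1)) : LaurentRing n :=
  AddMonoidAlgebra.single (Pi.single i 1) 1

/-- The subring of a product ring `ι → R` consisting of the tuples `f` such that for every
index `j` of a "move", `f (src j) - f (tgt j)` lies in the principal ideal generated by
`gen j`. -/
def compatSubring {R ι J : Type*} [CommRing R]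
    (src tgt : J → ι) (gen : J → R) : Subring (ι → R) where
  carrier := {f | ∀ j : J, f (src j) - f (tgt j) ∈ Ideal.span {gen j}}
  zero_mem' := by intro j; simp
  one_mem' := by intro j; simp
  add_mem' := by
    intro a b ha hb j
    have h : (a + b) (src j) - (a + b) (tgt j)
        = (a (src j) - a (tgt j)) + (b (src j) - b (tgt j)) := by
      simp only [Pi.add_apply]; ring
    rw [h]
    exact Ideal.add_mem _ (ha j) (hb j)
  neg_mem' := by
    intro a ha j
    have h : (-a) (src j) - (-a) (tgt j) = -(a (src j) - a (tgt j)) := by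
      simp only [Pi.neg_apply]; ring
    rw [h]
    exact Submodule.neg_mem _ (ha j)
  mul_mem' := by
    intro a b ha hb j
    have h : (a * b) (src j) - (a * b) (tgt j)
        = a (src j) * (b (src j) - b (tgt j)) + (a (src j) - a (tgt j)) * b (tgt j) := by
      simp only [Pi.mul_apply]; ring
    rw [h]
    exact Ideal.add_mem _ (Ideal.mul_mem_left _ _ (hb j)) (Ideal.mul_mem_right _ _ (ha j))

/-- The subring `R_K` of `∏_{σ ∈ Sym(E)} ℤ[T₀^{±1},…,T_n^{±1}]` of tuples `(f_σ)` with
`f_σ ≡ f_{σ∘(i,i+1)} mod (T_{σ(i)} − T_{σ(i+1)})` for all `σ` and all adjacent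
transpositions `(i, i+1)`. -/
noncomputable def RK (n : ℕ) : Subring (Equiv.Perm (Fin (n + 1)) → LaurentRing n) :=
  compatSubring (fun p : Equiv.Perm (Fin (n + 1)) × Fin n => p.1)
    (fun p => p.1 * Equiv.swap p.2.castSucc p.2.succ)
    (fun p => Tvar n (p.1 p.2.castSucc) - Tvar n (p.1 p.2.succ))

/-- The subring `R_A` of `∏_{σ ∈ Sym(E)} ℤ[t₀,…,t_n]` of tuples `(φ_σ)` with
`φ_σ ≡ φ_{σ∘(i,i+1)} mod (t_{σ(i)} − t_{σ(i+1)})` for all `σ` and all adjacent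
transpositions `(i, i+1)`. -/
noncomputable def RA (n : ℕ) : Subring (Equiv.Perm (Fin (n + 1)) → MvPolynomial (Fin (n + 1)) ℤ) :=
  compatSubring (fun p : Equiv.Perm (Fin (n + 1)) × Fin n => p.1)
    (fun p => p.1 * Equiv.swap p.2.castSucc p.2.succ)
    (fun p => MvPolynomial.X (p.1 p.2.castSucc) - MvPolynomial.X (p.1 p.2.succ))

/-- Evaluation of a Laurent polynomial at `T₀ = ⋯ = T_n = 1` (the augmentation map). -/
noncomputable def evalOnes (n : ℕ) : LaurentRing n →ₐ[ℤ] ℤ :=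
  AddMonoidAlgebra.lift ℤ ℤ (Fin (n + 1) → ℤ) 1

/-- The ideal `I_K ⊆ R_K` generated by the constant tuples `(f, …, f) − (f(1,…,1), …)`. -/
noncomputable def IK (n : ℕ) : Ideal (RK n) :=
  Ideal.span {x | ∃ g : LaurentRing n,
    (x : Equiv.Perm (Fin (n + 1)) → LaurentRing n)
      = fun _ => g - algebraMap ℤ (LaurentRing n) (evalOnes n g)}

/-- The ideal `I_A ⊆ R_A` generated by the constant tuples `(φ, …, φ) − (φ(0,…,0), …)`. -/
noncomputable def IA (n : ℕ) : Ideal (RA n) :=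
  Ideal.span {x | ∃ φ : MvPolynomial (Fin (n + 1)) ℤ,
    (x : Equiv.Perm (Fin (n + 1)) → MvPolynomial (Fin (n + 1)) ℤ)
      = fun _ => φ - MvPolynomial.C (MvPolynomial.eval (fun _ => (0 : ℤ)) φ)}

open MvPolynomial AddMonoidAlgebra

noncomputable section Helpers

variable (n : ℕ)

/-- The substitution `tᵢ ↦ Tᵢ − 1`. -/
def jj : MvPolynomial (Fin (n + 1)) ℤ →ₐ[ℤ] LaurentRing n :=
  MvPolynomial.aeval (fun i => Tvar n i - 1)

/-- The coercion of exponent vectors. -/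
def expCast : (Fin (n + 1) →₀ ℕ) →+ (Fin (n + 1) → ℤ) where
  toFun d := fun i => (d i : ℤ)
  map_zero' := by ext i; simp
  map_add' a b := by ext i; simp

lemma expCast_injective : Function.Injective (expCast n) := by
  intro a b h
  ext i
  have h2 := congrFun h i
  simp only [expCast, AddMonoidHom.coe_mk, ZeroHom.coe_mk] at h2
  exact_mod_cast h2

lemma aevalTvar_eq_mapDomain :
    (MvPolynomial.aeval (Tvar n) : MvPolynomial (Fin (n + 1)) ℤ →ₐ[ℤ] LaurentRing n)
      = AddMonoidAlgebra.mapDomainAlgHom ℤ ℤ (expCast n) := by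
  apply MvPolynomial.algHom_ext
  intro i
  show _ = AddMonoidAlgebra.mapDomain (expCast n) (MvPolynomial.X i)
  rw [MvPolynomial.aeval_X]
  have : (MvPolynomial.X i : MvPolynomial (Fin (n+1)) ℤ)
      = AddMonoidAlgebra.single (Finsupp.single i 1) 1 := by
    rw [MvPolynomial.X, MvPolynomial.single_eq_monomial]
  rw [this, AddMonoidAlgebra.mapDomain_single]
  show Tvar n i = AddMonoidAlgebra.single _ 1
  have hfun : Pi.single i (1:ℤ) = expCast n (Finsupp.single i 1) := by
    funext k
    simp only [expCast, AddMonoidHom.coe_mk, ZeroHom.coe_mk]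
    by_cases h : k = i
    · subst h; simp
    · simp [Pi.single_apply, h, Finsupp.single_apply, Ne.symm h]
  rw [Tvar, hfun]

lemma aevalTvar_injective :
    Function.Injective (MvPolynomial.aeval (Tvar n) : MvPolynomial (Fin (n + 1)) ℤ →ₐ[ℤ] _) := by
  rw [aevalTvar_eq_mapDomain]
  intro a b h
  exact AddMonoidAlgebra.mapDomain_injective (expCast_injective n) h

/-- The shift `tᵢ ↦ tᵢ + 1`. -/
def shiftUp : MvPolynomial (Fin (n + 1)) ℤ →ₐ[ℤ] MvPolynomial (Fin (n + 1)) ℤ :=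
  MvPolynomial.aeval (fun i => MvPolynomial.X i + 1)

lemma jj_comp_shiftUp : (jj n).comp (shiftUp n) = MvPolynomial.aeval (Tvar n) := by
  apply MvPolynomial.algHom_ext
  intro i
  simp [jj, shiftUp]

lemma shiftUp_surjective : Function.Surjective (shiftUp n) := by
  intro p
  refine ⟨MvPolynomial.aeval (fun i => MvPolynomial.X i - 1) p, ?_⟩
  have : (shiftUp n).comp (MvPolynomial.aeval (fun i => MvPolynomial.X i - 1))
      = AlgHom.id ℤ _ := by
    apply MvPolynomial.algHom_ext
    intro i
    simp [shiftUp]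
  calc shiftUp n (MvPolynomial.aeval (fun i => MvPolynomial.X i - 1) p)
      = ((shiftUp n).comp (MvPolynomial.aeval (fun i => MvPolynomial.X i - 1))) p := (AlgHom.comp_apply _ _ _).symm
    _ = p := by rw [this, AlgHom.id_apply]

lemma jj_injective : Function.Injective (jj n) := by
  intro a b h
  obtain ⟨a', rfl⟩ := shiftUp_surjective n a
  obtain ⟨b', rfl⟩ := shiftUp_surjective n b
  have ha : jj n (shiftUp n a') = MvPolynomial.aeval (Tvar n) a' := by
    rw [← jj_comp_shiftUp]; rfl
  have hb : jj n (shiftUp n b') = MvPolynomial.aeval (Tvar n) b' := by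
    rw [← jj_comp_shiftUp]; rfl
  rw [ha, hb] at h
  rw [aevalTvar_injective n h]

lemma range_jj : (jj n).range = (MvPolynomial.aeval (Tvar n) :
    MvPolynomial (Fin (n + 1)) ℤ →ₐ[ℤ] LaurentRing n).range := by
  rw [← jj_comp_shiftUp]
  rw [AlgHom.range_comp]
  rw [(AlgHom.range_eq_top (shiftUp n)).mpr (shiftUp_surjective n), Algebra.map_top]

end Helpers
noncomputable section Helpers2

variable (n : ℕ)

/-- The monomial `(T₀⋯T_n)^m`. -/
def Wm (m : ℕ) : LaurentRing n := AddMonoidAlgebra.single (fun _ => (m : ℤ)) 1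

/-- The polynomial `∏ᵢ (tᵢ+1)^m`. -/
def wpoly (m : ℕ) : MvPolynomial (Fin (n + 1)) ℤ :=
  ∏ i : Fin (n + 1), (MvPolynomial.X i + 1) ^ m

lemma Wm_mul (m k : ℕ) : Wm n m * Wm n k = Wm n (m + k) := by
  have h : ((fun _ => (m : ℤ)) + (fun _ => (k : ℤ))) = (fun _ : Fin (n+1) => ((m + k : ℕ) : ℤ)) := by
    funext i; push_cast; simp
  rw [Wm, Wm, Wm, AddMonoidAlgebra.single_mul_single, mul_one, h]

lemma Wm_zero : Wm n 0 = 1 := by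
  rw [Wm]
  simp only [Nat.cast_zero]
  rfl

lemma prod_Tvar_pow (d : Fin (n + 1) → ℕ) :
    (∏ i : Fin (n + 1), Tvar n i ^ d i)
      = AddMonoidAlgebra.single (fun i => (d i : ℤ)) 1 := by
  have h1 : ∀ i, Tvar n i ^ d i
      = AddMonoidAlgebra.single (Pi.single i ((d i : ℤ))) 1 := by
    intro i
    rw [Tvar, AddMonoidAlgebra.single_pow, one_pow]
    congr 1
    funext k
    by_cases h : k = i
    · subst h; simp
    · simp [Pi.single_apply, h]
  calc (∏ i : Fin (n + 1), Tvar n i ^ d i)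
      = ∏ i : Fin (n + 1), AddMonoidAlgebra.single (Pi.single i ((d i : ℤ))) 1 := by
        exact Finset.prod_congr rfl (fun i _ => h1 i)
    _ = AddMonoidAlgebra.single (∑ i : Fin (n + 1), Pi.single i ((d i : ℤ)))
          (∏ _i : Fin (n + 1), (1 : ℤ)) := AddMonoidAlgebra.prod_single _ _ _
    _ = _ := by
        congr 1
        · funext k
          rw [Finset.sum_apply]
          simp [Pi.single_apply]
        · simp

lemma jj_wpoly (m : ℕ) : jj n (wpoly n m) = Wm n m := by
  rw [wpoly, map_prod]
  have : ∀ i : Fin (n+1), jj n ((MvPolynomial.X i + 1) ^ m) = Tvar n i ^ m := by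
    intro i
    rw [map_pow]
    congr 1
    simp [jj]
  rw [Finset.prod_congr rfl (fun i _ => this i)]
  rw [prod_Tvar_pow]
  rfl

lemma single_mem_range (b : Fin (n + 1) → ℤ) (c : ℤ) (hb : ∀ i, 0 ≤ b i) :
    AddMonoidAlgebra.single b c ∈ (jj n).range := by
  rw [range_jj]
  have key : MvPolynomial.aeval (Tvar n)
      (MvPolynomial.monomial (Finsupp.equivFunOnFinite.symm (fun i => (b i).toNat)) c)
      = AddMonoidAlgebra.single b c := by
    rw [MvPolynomial.aeval_monomial]
    rw [Finsupp.prod_fintype _ _ (fun i => pow_zero _)]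
    have h2 : (∏ i : Fin (n+1), Tvar n i ^ (Finsupp.equivFunOnFinite.symm (fun i => (b i).toNat)) i)
        = AddMonoidAlgebra.single b 1 := by
      rw [prod_Tvar_pow]
      congr 1
      funext i
      simp [Int.toNat_of_nonneg (hb i)]
    rw [h2]
    have halg : (algebraMap ℤ (LaurentRing n)) c = AddMonoidAlgebra.single 0 c := rfl
    rw [halg, AddMonoidAlgebra.single_mul_single, zero_add, mul_one]
  exact ⟨_, key⟩

lemma mul_Wm_mem_mono {g : LaurentRing n} {m : ℕ} (k : ℕ)
    (h : g * Wm n m ∈ (jj n).range) : g * Wm n (m + k) ∈ (jj n).range := by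
  rw [← Wm_mul, ← mul_assoc]
  have hW : Wm n k ∈ (jj n).range := (jj n).mem_range.mpr ⟨wpoly n k, jj_wpoly n k⟩
  exact Subalgebra.mul_mem _ h hW

lemma exists_mul_Wm_mem (g : LaurentRing n) : ∃ m : ℕ, g * Wm n m ∈ (jj n).range := by
  induction g using AddMonoidAlgebra.induction_linear with
  | zero => exact ⟨0, by rw [zero_mul]; exact zero_mem (jj n).range⟩
  | add f g hf hg =>
    obtain ⟨m₁, h₁⟩ := hf
    obtain ⟨m₂, h₂⟩ := hg
    refine ⟨m₁ + m₂, ?_⟩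
    rw [add_mul]
    have hg2 := mul_Wm_mem_mono n m₁ h₂
    rw [Nat.add_comm m₂ m₁] at hg2
    exact Subalgebra.add_mem _ (mul_Wm_mem_mono n m₂ h₁) hg2
  | single a c =>
    refine ⟨Finset.univ.sup (fun i => (-(a i)).toNat), ?_⟩
    show AddMonoidAlgebra.single a c * Wm n _ ∈ _
    rw [Wm, AddMonoidAlgebra.single_mul_single, mul_one]
    apply single_mem_range
    intro i
    have hle : (-(a i)).toNat ≤ Finset.univ.sup (fun i => (-(a i)).toNat) :=
      Finset.le_sup (f := fun i => (-(a i)).toNat) (Finset.mem_univ i)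
    have : -(a i) ≤ ((Finset.univ.sup (fun i => (-(a i)).toNat) : ℕ) : ℤ) :=
      le_trans (Int.self_le_toNat _) (by exact_mod_cast hle)
    simp only [Pi.add_apply]
    omega

end Helpers2
noncomputable section Helpers3

variable (n : ℕ)

/-- Evaluation at the origin, as an algebra hom. -/
def eval0 : MvPolynomial (Fin (n + 1)) ℤ →ₐ[ℤ] ℤ :=
  MvPolynomial.aeval (fun _ => (0 : ℤ))

lemma eval0_eq (p : MvPolynomial (Fin (n + 1)) ℤ) :
    eval0 n p = MvPolynomial.eval (fun _ => (0 : ℤ)) p := by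
  rw [eval0, MvPolynomial.aeval_def, MvPolynomial.eval, RingHom.ext_int (algebraMap ℤ ℤ) (RingHom.id ℤ)]
  rfl

lemma evalOnes_single (a : Fin (n + 1) → ℤ) (c : ℤ) :
    evalOnes n (AddMonoidAlgebra.single a c) = c := by
  rw [evalOnes, AddMonoidAlgebra.lift_single]
  simp

lemma evalOnes_Tvar (i : Fin (n + 1)) : evalOnes n (Tvar n i) = 1 :=
  evalOnes_single n _ 1

lemma evalOnes_Wm (m : ℕ) : evalOnes n (Wm n m) = 1 :=
  evalOnes_single n _ 1

lemma evalOnes_jj (p : MvPolynomial (Fin (n + 1)) ℤ) :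
    evalOnes n (jj n p) = eval0 n p := by
  have h : (evalOnes n).comp (jj n) = eval0 n := by
    rw [jj, MvPolynomial.comp_aeval, eval0]
    congr 1
    funext i
    rw [map_sub, evalOnes_Tvar, map_one, sub_self]
  calc evalOnes n (jj n p) = ((evalOnes n).comp (jj n)) p := rfl
    _ = eval0 n p := by rw [h]

/-- The substitution `t_a ↦ t_b` (identity on the other variables). -/
def evSub (a b : Fin (n + 1)) : MvPolynomial (Fin (n + 1)) ℤ →ₐ[ℤ] MvPolynomial (Fin (n + 1)) ℤ :=
  MvPolynomial.aeval (Function.update MvPolynomial.X a (MvPolynomial.X b))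

lemma evSub_X (a b i : Fin (n + 1)) :
    evSub n a b (MvPolynomial.X i) = if i = a then MvPolynomial.X b else MvPolynomial.X i := by
  rw [evSub, MvPolynomial.aeval_X]
  by_cases h : i = a
  · subst h; simp
  · simp [Function.update_apply, h]

lemma sub_evSub_mem_span (a b : Fin (n + 1)) (p : MvPolynomial (Fin (n + 1)) ℤ) :
    p - evSub n a b p ∈ Ideal.span {(MvPolynomial.X a - MvPolynomial.X b : MvPolynomial (Fin (n + 1)) ℤ)} := by
  induction p using MvPolynomial.induction_on with
  | C r =>
    have : evSub n a b (MvPolynomial.C r) = MvPolynomial.C r := by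
      rw [show (MvPolynomial.C r : MvPolynomial (Fin (n+1)) ℤ) = algebraMap ℤ _ r from rfl,
        AlgHom.commutes]
    rw [this, sub_self]; exact Ideal.zero_mem _
  | add p q hp hq =>
    have h : p + q - evSub n a b (p + q) = (p - evSub n a b p) + (q - evSub n a b q) := by
      rw [map_add]; ring
    rw [h]; exact Ideal.add_mem _ hp hq
  | mul_X p i hp =>
    have h : p * MvPolynomial.X i - evSub n a b (p * MvPolynomial.X i)
        = (p - evSub n a b p) * MvPolynomial.X i
          + evSub n a b p * (MvPolynomial.X i - evSub n a b (MvPolynomial.X i)) := by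
      rw [map_mul]; ring
    rw [h]
    refine Ideal.add_mem _ (Ideal.mul_mem_right _ _ hp) (Ideal.mul_mem_left _ _ ?_)
    rw [evSub_X]
    by_cases hia : i = a
    · subst hia; simp only [if_pos rfl]; exact Ideal.subset_span rfl
    · rw [if_neg hia, sub_self]; exact Ideal.zero_mem _

lemma evSub_wpoly_ne_zero (a b : Fin (n + 1)) (m : ℕ) : evSub n a b (wpoly n m) ≠ 0 := by
  intro h
  have h0 : eval0 n (evSub n a b (wpoly n m)) = 1 := by
    have hcomp : (eval0 n).comp (evSub n a b) = eval0 n := by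
      rw [evSub, eval0, MvPolynomial.comp_aeval]
      congr 1
      funext i
      by_cases hia : i = a
      · subst hia
        rw [Function.update_self]
        exact MvPolynomial.aeval_X _ b
      · rw [Function.update_of_ne hia]
        exact MvPolynomial.aeval_X _ i
    have : eval0 n (evSub n a b (wpoly n m)) = eval0 n (wpoly n m) := by
      calc eval0 n (evSub n a b (wpoly n m)) = ((eval0 n).comp (evSub n a b)) (wpoly n m) := rfl
        _ = eval0 n (wpoly n m) := by rw [hcomp]
    rw [this, wpoly, map_prod]
    simp [eval0]
  rw [h, map_zero] at h0
  simp at h0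

lemma jj_X_sub_X (a b : Fin (n + 1)) :
    jj n (MvPolynomial.X a - MvPolynomial.X b) = Tvar n a - Tvar n b := by
  rw [map_sub, jj, MvPolynomial.aeval_X, MvPolynomial.aeval_X]
  ring

lemma mem_span_of_jj_mem_span {a b : Fin (n + 1)} (hab : a ≠ b)
    {p : MvPolynomial (Fin (n + 1)) ℤ}
    (h : jj n p ∈ Ideal.span {Tvar n a - Tvar n b}) :
    p ∈ Ideal.span {(MvPolynomial.X a - MvPolynomial.X b : MvPolynomial (Fin (n + 1)) ℤ)} := by
  obtain ⟨c, hc⟩ := Ideal.mem_span_singleton'.mp h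
  obtain ⟨m, d, hd⟩ : ∃ m d, jj n d = c * Wm n m := by
    obtain ⟨m, hm⟩ := exists_mul_Wm_mem n c
    obtain ⟨d, hd⟩ := hm
    exact ⟨m, d, hd⟩
  have key : p * wpoly n m = (MvPolynomial.X a - MvPolynomial.X b) * d := by
    apply jj_injective n
    rw [map_mul, map_mul, jj_wpoly, jj_X_sub_X, hd, ← hc]
    ring
  have hev : evSub n a b p * evSub n a b (wpoly n m) = 0 := by
    have := congrArg (evSub n a b) key
    rw [map_mul, map_mul, map_sub, evSub_X, evSub_X, if_pos rfl, if_neg (Ne.symm hab),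
      sub_self, zero_mul] at this
    exact this
  have hp0 : evSub n a b p = 0 :=
    (mul_eq_zero.mp hev).resolve_right (evSub_wpoly_ne_zero n a b m)
  have := sub_evSub_mem_span n a b p
  rw [hp0, sub_zero] at this
  exact this

lemma jj_mem_span {a b : Fin (n + 1)} {p : MvPolynomial (Fin (n + 1)) ℤ}
    (h : p ∈ Ideal.span {(MvPolynomial.X a - MvPolynomial.X b : MvPolynomial (Fin (n + 1)) ℤ)}) :
    jj n p ∈ Ideal.span {Tvar n a - Tvar n b} := by
  obtain ⟨c, hc⟩ := Ideal.mem_span_singleton'.mp h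
  apply Ideal.mem_span_singleton'.mpr
  exact ⟨jj n c, by rw [← jj_X_sub_X, ← map_mul, hc]⟩

end Helpers3
noncomputable section Main

variable (n : ℕ)

lemma const_mem_compat {R ι J : Type*} [CommRing R]
    (src tgt : J → ι) (gen : J → R) (r : R) :
    (fun _ : ι => r) ∈ compatSubring src tgt gen := by
  intro j
  rw [sub_self]
  exact Ideal.zero_mem _

lemma perm_ne (σ : Equiv.Perm (Fin (n + 1))) (i : Fin n) :
    σ i.castSucc ≠ σ i.succ :=
  fun h => (i.castSucc_lt_succ).ne (σ.injective h)

/-- Coercion of `R_A` to tuples. -/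
def cA (q : RA n) : Equiv.Perm (Fin (n + 1)) → MvPolynomial (Fin (n + 1)) ℤ := q

/-- Coercion of `R_K` to tuples. -/
def cK (f : RK n) : Equiv.Perm (Fin (n + 1)) → LaurentRing n := f

lemma cA_add (x y : RA n) : cA n (x + y) = cA n x + cA n y := rfl
lemma cA_mul (x y : RA n) : cA n (x * y) = cA n x * cA n y := rfl
lemma cK_add (x y : RK n) : cK n (x + y) = cK n x + cK n y := rfl
lemma cK_mul (x y : RK n) : cK n (x * y) = cK n x * cK n y := rfl
lemma cA_injective : Function.Injective (cA n) := fun _ _ h => Subtype.ext h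
lemma cK_injective : Function.Injective (cK n) := fun _ _ h => Subtype.ext h

/-- The constant tuple `(w m, …, w m)` in `R_A`. -/
def wtupleA (m : ℕ) : RA n := ⟨fun _ => wpoly n m, const_mem_compat _ _ _ _⟩

lemma eval0_wpoly (m : ℕ) : eval0 n (wpoly n m) = 1 := by
  rw [wpoly, map_prod]
  simp [eval0]

lemma eval0_C (c : ℤ) : eval0 n (MvPolynomial.C c) = c := by
  rw [show (MvPolynomial.C c : MvPolynomial (Fin (n + 1)) ℤ) = algebraMap ℤ _ c from rfl,
    AlgHom.commutes, algebraMap_int_eq, eq_intCast, Int.cast_id]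

lemma jj_C (c : ℤ) : jj n (MvPolynomial.C c) = algebraMap ℤ (LaurentRing n) c := by
  rw [show (MvPolynomial.C c : MvPolynomial (Fin (n + 1)) ℤ) = algebraMap ℤ _ c from rfl,
    AlgHom.commutes]

/-- The tuple-wise substitution `tᵢ ↦ Tᵢ − 1` as a ring hom `R_A →+* R_K`. -/
def Jmap : RA n →+* RK n where
  toFun q := ⟨fun σ => jj n (cA n q σ), by
    intro pr
    have hq := q.2 pr
    rw [← map_sub]
    exact jj_mem_span n hq⟩
  map_one' := Subtype.ext (funext fun σ => by
    show jj n (cA n 1 σ) = 1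
    show jj n 1 = 1
    exact map_one _)
  map_mul' x y := Subtype.ext (funext fun σ => by
    show jj n (cA n (x * y) σ) = jj n (cA n x σ) * jj n (cA n y σ)
    rw [cA_mul, Pi.mul_apply, map_mul])
  map_zero' := Subtype.ext (funext fun σ => by
    show jj n (cA n 0 σ) = 0
    show jj n 0 = 0
    exact map_zero _)
  map_add' x y := Subtype.ext (funext fun σ => by
    show jj n (cA n (x + y) σ) = jj n (cA n x σ) + jj n (cA n y σ)
    rw [cA_add, Pi.add_apply, map_add])

lemma Jmap_coe (q : RA n) (σ : Equiv.Perm (Fin (n + 1))) :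
    cK n (Jmap n q) σ = jj n (cA n q σ) := rfl

/-- Uniform denominator clearing for a tuple in `R_K`. -/
lemma exists_uniform (r : RK n) :
    ∃ (M : ℕ) (ρ : RA n), ∀ σ, cK n r σ * Wm n M = jj n (cA n ρ σ) := by
  classical
  have hch : ∀ σ, ∃ m, cK n r σ * Wm n m ∈ (jj n).range := fun σ =>
    exists_mul_Wm_mem n (cK n r σ)
  choose ms hms using hch
  set M := Finset.univ.sup ms with hM
  have hmem : ∀ σ, ∃ p, jj n p = cK n r σ * Wm n M := by
    intro σ
    have hle : ms σ ≤ M := Finset.le_sup (f := ms) (Finset.mem_univ σ)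
    have h2 := mul_Wm_mem_mono n (M - ms σ) (hms σ)
    rw [Nat.add_sub_cancel' hle] at h2
    obtain ⟨p, hp⟩ := h2
    exact ⟨p, hp⟩
  choose p hp using hmem
  have hcompat : p ∈ RA n := by
    intro pr
    apply mem_span_of_jj_mem_span n (perm_ne n pr.1 pr.2)
    rw [map_sub, hp, hp]
    have h3 : cK n r pr.1 * Wm n M
          - cK n r (pr.1 * Equiv.swap pr.2.castSucc pr.2.succ) * Wm n M
        = (cK n r pr.1 - cK n r (pr.1 * Equiv.swap pr.2.castSucc pr.2.succ)) * Wm n M := by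
      ring
    rw [h3]
    exact Ideal.mul_mem_right _ _ (r.2 pr)
  exact ⟨M, ⟨p, hcompat⟩, fun σ => (hp σ).symm⟩

set_option synthInstance.maxHeartbeats 100000 in
/-- Denominator clearing for elements of the ideal `I_K`. -/
lemma exists_uniform_IK (x : RK n) (hx : x ∈ IK n) :
    ∃ (m : ℕ) (y : RA n), y ∈ IA n ∧ ∀ σ, cK n x σ * Wm n m = jj n (cA n y σ) := by
  refine Submodule.span_induction ?_ ?_ ?_ ?_ hx
  · -- generators
    rintro x ⟨g, hg⟩
    obtain ⟨m, hm⟩ := exists_mul_Wm_mem n g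
    have hm' : ∃ p, jj n p = g * Wm n m := hm
    obtain ⟨p, hp⟩ := hm'
    have heval : eval0 n p = evalOnes n g := by
      have h4 := congrArg (evalOnes n) hp
      rw [map_mul, evalOnes_Wm, mul_one, evalOnes_jj] at h4
      exact h4
    set φ := p - MvPolynomial.C (evalOnes n g) * wpoly n m with hφ
    have hφ0 : eval0 n φ = 0 := by
      rw [hφ, map_sub, map_mul, eval0_wpoly, heval, eval0_C]
      ring
    refine ⟨m, ⟨fun _ => φ, const_mem_compat _ _ _ _⟩, ?_, ?_⟩
    · apply Ideal.subset_span
      refine ⟨φ, ?_⟩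
      show (fun _ => φ) = fun _ => φ - MvPolynomial.C (MvPolynomial.eval (fun _ => (0:ℤ)) φ)
      rw [← eval0_eq, hφ0, map_zero, sub_zero]
    · intro σ
      show cK n x σ * Wm n m = jj n φ
      have hxσ : cK n x σ = g - algebraMap ℤ (LaurentRing n) (evalOnes n g) :=
        congrFun hg σ
      rw [hxσ, hφ, map_sub, map_mul, jj_wpoly, hp, jj_C]
      ring
  · refine ⟨0, 0, Ideal.zero_mem _, fun σ => ?_⟩
    show cK n 0 σ * Wm n 0 = jj n (cA n 0 σ)
    show (0 : LaurentRing n) * Wm n 0 = jj n 0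
    rw [zero_mul, map_zero]
  · rintro x y hx' hy' ⟨m₁, y₁, hy₁, hxy₁⟩ ⟨m₂, y₂, hy₂, hxy₂⟩
    refine ⟨m₁ + m₂, y₁ * wtupleA n m₂ + y₂ * wtupleA n m₁,
      Ideal.add_mem _ (Ideal.mul_mem_right _ _ hy₁) (Ideal.mul_mem_right _ _ hy₂), ?_⟩
    intro σ
    have hcoe : cA n (y₁ * wtupleA n m₂ + y₂ * wtupleA n m₁) σ
        = cA n y₁ σ * wpoly n m₂ + cA n y₂ σ * wpoly n m₁ := rfl
    rw [hcoe, map_add, map_mul, map_mul, jj_wpoly, jj_wpoly, ← hxy₁, ← hxy₂]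
    have hcoe2 : cK n (x + y) σ = cK n x σ + cK n y σ := rfl
    rw [hcoe2, ← Wm_mul]
    ring
  · rintro r x hx' ⟨m, y, hy, hxy⟩
    rw [smul_eq_mul]
    obtain ⟨M, ρ, hρ⟩ := exists_uniform n r
    refine ⟨M + m, ρ * y, Ideal.mul_mem_left _ _ hy, ?_⟩
    intro σ
    have hcoe : cA n (ρ * y) σ = cA n ρ σ * cA n y σ := rfl
    have hcoe2 : cK n (r * x) σ = cK n r σ * cK n x σ := rfl
    rw [hcoe, map_mul, ← hρ, ← hxy, hcoe2, ← Wm_mul]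
    ring

end Main
noncomputable section Final

variable (n : ℕ)

/-- The composed map `R_A → R_K → R_K/I_K`. -/
def Phi : RA n →+* (RK n ⧸ IK n) :=
  (Ideal.Quotient.mk (IK n)).comp (Jmap n)

lemma IA_le_ker : IA n ≤ RingHom.ker (Phi n) := by
  rw [IA, Ideal.span_le]
  rintro x ⟨φ, hφ⟩
  rw [SetLike.mem_coe, RingHom.mem_ker, Phi, RingHom.comp_apply,
    Ideal.Quotient.eq_zero_iff_mem]
  apply Ideal.subset_span
  refine ⟨jj n φ, ?_⟩
  funext σ
  have h1 : cK n (Jmap n x) σ = jj n (cA n x σ) := rfl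
  have h2 : cA n x σ = φ - MvPolynomial.C (MvPolynomial.eval (fun _ => (0:ℤ)) φ) :=
    congrFun hφ σ
  show cK n (Jmap n x) σ = _
  rw [h1, h2, map_sub, jj_C, ← eval0_eq, evalOnes_jj]

/-- The induced map `R_A/I_A → R_K/I_K`. -/
def PhiBar : (RA n ⧸ IA n) →+* (RK n ⧸ IK n) :=
  Ideal.Quotient.lift (IA n) (Phi n) (fun a ha => (RingHom.mem_ker).mp (IA_le_ker n ha))

lemma wtupleA_sub_one_mem (m : ℕ) : wtupleA n m - 1 ∈ IA n := by
  apply Ideal.subset_span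
  refine ⟨wpoly n m, ?_⟩
  funext σ
  show cA n (wtupleA n m - 1) σ = _
  have h1 : cA n (wtupleA n m - 1) σ = wpoly n m - 1 := rfl
  rw [h1, ← eval0_eq, eval0_wpoly]
  norm_num

lemma PhiBar_injective : Function.Injective (PhiBar n) := by
  apply RingHom.lift_injective_of_ker_le_ideal
  intro q hq
  rw [RingHom.mem_ker, Phi, RingHom.comp_apply, Ideal.Quotient.eq_zero_iff_mem] at hq
  obtain ⟨m, y, hy, hqy⟩ := exists_uniform_IK n (Jmap n q) hq
  have hqw : q * wtupleA n m = y := by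
    apply cA_injective n
    funext σ
    apply jj_injective n
    have h1 : cA n (q * wtupleA n m) σ = cA n q σ * wpoly n m := rfl
    rw [h1, map_mul, jj_wpoly]
    exact hqy σ
  have hmem : q * wtupleA n m ∈ IA n := hqw ▸ hy
  have hsub : q * (wtupleA n m - 1) ∈ IA n :=
    Ideal.mul_mem_left _ _ (wtupleA_sub_one_mem n m)
  have : q = q * wtupleA n m - q * (wtupleA n m - 1) := by ring
  rw [this]
  exact Ideal.sub_mem _ hmem hsub

lemma WtupleK_mem (m : ℕ) : (fun _ : Equiv.Perm (Fin (n + 1)) => Wm n m) ∈ RK n :=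
  const_mem_compat _ _ _ _

lemma PhiBar_surjective : Function.Surjective (PhiBar n) := by
  intro b
  obtain ⟨f, rfl⟩ := Ideal.Quotient.mk_surjective b
  obtain ⟨M, ρ, hρ⟩ := exists_uniform n f
  refine ⟨Ideal.Quotient.mk (IA n) ρ, ?_⟩
  have h1 : PhiBar n (Ideal.Quotient.mk (IA n) ρ) = Ideal.Quotient.mk (IK n) (Jmap n ρ) := rfl
  rw [h1]
  rw [Ideal.Quotient.mk_eq_mk_iff_sub_mem]
  have hW : Jmap n ρ - f = f * (⟨fun _ => Wm n M, WtupleK_mem n M⟩ - 1 : RK n) := by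
    apply cK_injective n
    funext σ
    show cK n (Jmap n ρ) σ - cK n f σ = cK n f σ * (Wm n M - 1)
    rw [Jmap_coe, ← hρ σ]
    ring
  rw [hW]
  apply Ideal.mul_mem_left
  apply Ideal.subset_span
  refine ⟨Wm n M, ?_⟩
  funext σ
  show Wm n M - 1 = Wm n M - algebraMap ℤ (LaurentRing n) (evalOnes n (Wm n M))
  rw [evalOnes_Wm, map_one]

end Final
/-- The exceptional Hirzebruch–Riemann–Roch-type isomorphism: there is a ring isomorphism
`ζ : R_K/I_K ≃ R_A/I_A` which, on every tuple whose entries are ordinary polynomials in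
`T₀, …, T_n`, is induced by the substitution `Tᵢ ↦ tᵢ + 1`. -/
theorem stmt18 (n : ℕ) :
    ∃ ζ : (RK n) ⧸ (IK n) ≃+* (RA n) ⧸ (IA n),
      ∀ (f : RK n) (p : Equiv.Perm (Fin (n + 1)) → MvPolynomial (Fin (n + 1)) ℤ),
        (∀ σ, (f : Equiv.Perm (Fin (n + 1)) → LaurentRing n) σ
            = MvPolynomial.aeval (Tvar n) (p σ)) →
        ∀ q : RA n,
          (∀ σ, (q : Equiv.Perm (Fin (n + 1)) → MvPolynomial (Fin (n + 1)) ℤ) σ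
              = MvPolynomial.aeval (fun i => MvPolynomial.X i + 1) (p σ)) →
          ζ (Ideal.Quotient.mk (IK n) f) = Ideal.Quotient.mk (IA n) q := by
  refine ⟨(RingEquiv.ofBijective (PhiBar n)
    ⟨PhiBar_injective n, PhiBar_surjective n⟩).symm, ?_⟩
  intro f p hp q hq
  have hJ : Jmap n q = f := by
    apply cK_injective n
    funext σ
    rw [Jmap_coe]
    have hqσ : cA n q σ = shiftUp n (p σ) := hq σ
    rw [hqσ]
    have h2 : jj n (shiftUp n (p σ)) = MvPolynomial.aeval (Tvar n) (p σ) := by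
      rw [← jj_comp_shiftUp]; rfl
    rw [h2]
    exact (hp σ).symm
  have key : (RingEquiv.ofBijective (PhiBar n)
      ⟨PhiBar_injective n, PhiBar_surjective n⟩) (Ideal.Quotient.mk (IA n) q)
      = Ideal.Quotient.mk (IK n) f := by
    show PhiBar n (Ideal.Quotient.mk (IA n) q) = Ideal.Quotient.mk (IK n) f
    rw [PhiBar, Ideal.Quotient.lift_mk]
    show Ideal.Quotient.mk (IK n) (Jmap n q) = Ideal.Quotient.mk (IK n) f
    rw [hJ]
  rw [← key, RingEquiv.symm_apply_apply]
end

section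
/- Let M be a matroid on a finite ground set E, and let ∅ ⊊ S₁ ⊊ ⋯ ⊊ S_k ⊊ E be a chain of nonempty proper subsets of E (set S₀ = ∅ and S_{k+1} = E). Let w = ∑_{i=1}^k e_{S_i} ∈ ℝ^E, where e_S = ∑_{j∈S} e_j. Then the face of the base polytope P(M) on which the linear functional x ↦ ⟨x, w⟩ attains its maximum over P(M) is exactly the set of points x ∈ P(M) whose restriction to the coordinates indexed by S_{i+1}∖S_i lies in the base polytope P(M|S_{i+1}/S_i) ⊆ ℝ^{S_{i+1}∖S_i} for every i = 0,…,k; equivalently, under the identification ℝ^E ≅ ∏_{i=0}^k ℝ^{S_{i+1}∖S_i}, this face equals the product P(M|S₁) × P(M|S₂/S₁) × ⋯ × P(M/S_k). -/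
open Matroid
open scoped Classical

variable {α : Type*}

/-- Contraction of a set `C` in the matroid `M`, defined via duality:
`M / C = (M✶ \ C)✶`, a matroid on `M.E \ C`. -/
def mcontract (M : Matroid α) (C : Set α) : Matroid α := (M✶ ↾ (M.E \ C))✶

/-- The weight vector `w = ∑_{i=1}^{k} e_{S i}` associated to a chain
`∅ = S 0 ⊊ S 1 ⊊ ⋯ ⊊ S (k+1) = E`. -/
noncomputable def chainWeight [Fintype α] {k : ℕ} (S : Fin (k + 2) → Set α) (j : α) : ℝ :=
  ∑ i : Fin (k + 2), if i ≠ 0 ∧ i ≠ Fin.last (k + 1) ∧ j ∈ S i then 1 else 0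

/-!
For a base `B`, `⟨e_B, w⟩ = ∑ᵢ |B ∩ Sᵢ|` is at most `∑ᵢ r(Sᵢ)`, with equality exactly when every
`B ∩ Sᵢ` is a basis of `Sᵢ`. Such bases exist (extend a basis up the chain), and for them each
`B ∩ (Sᵢ₊₁ \ Sᵢ)` is a base of `M|Sᵢ₊₁/Sᵢ`. Hence the maximal face, being the convex hull of the
maximizing vertices, projects blockwise into the minor polytopes. Conversely `⟨x, w⟩` depends only
on the coordinate sums of `x` over the blocks, and on each minor polytope that sum is the rank of
the minor, so every point of the product attains the maximum.
-/

open Set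

section ExposedFace

variable {E : Type*} [AddCommGroup E] [Module ℝ E]

lemma LinearMap.apply_le_of_mem_convexHull (f : E →ₗ[ℝ] ℝ) {V : Set E} {c : ℝ}
    (hV : ∀ v ∈ V, f v ≤ c) {x : E} (hx : x ∈ convexHull ℝ V) : f x ≤ c :=
  convexHull_min hV (convex_halfSpace_le f.isLinear c) hx

/-- In a convex combination attaining the bound, every point of positive weight attains it. -/
lemma LinearMap.mem_convexHull_setOf_apply_eq (f : E →ₗ[ℝ] ℝ) {V : Set E} {c : ℝ}
    (hV : ∀ v ∈ V, f v ≤ c) {x : E} (hx : x ∈ convexHull ℝ V) (hfx : f x = c) :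
    x ∈ convexHull ℝ {v ∈ V | f v = c} := by
  classical
  obtain ⟨ι, _, w, z, hw₀, hw₁, hz, rfl⟩ := mem_convexHull_iff_exists_fintype.1 hx
  have hle : ∀ i ∈ Finset.univ, w i * f (z i) ≤ w i * c := fun i _ =>
    mul_le_mul_of_nonneg_left (hV _ (hz i)) (hw₀ i)
  have heq : ∀ i ∈ Finset.univ, w i * f (z i) = w i * c := by
    refine (Finset.sum_eq_sum_iff_of_le hle).1 ?_
    simpa [← Finset.sum_mul, hw₁] using hfx
  have hsum : ∑ i with w i ≠ 0, w i = 1 := by rw [Finset.sum_filter_ne_zero, hw₁]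
  rw [← Finset.centerMass_eq_of_sum_1 _ _ hw₁, ← Finset.centerMass_filter_ne_zero]
  refine Finset.centerMass_mem_convexHull _ (fun i _ => hw₀ i) (by rw [hsum]; exact one_pos)
    fun i hi => ⟨hz i, ?_⟩
  exact mul_left_cancel₀ (Finset.mem_filter.1 hi).2 (heq i (Finset.mem_univ i))

end ExposedFace

namespace Matroid

variable {M : Matroid α}

lemma IsBasis.ncard_eq_ncard {I J X : Set α} (hI : M.IsBasis I X) (hJ : M.IsBasis J X) :
    I.ncard = J.ncard := by
  rw [ncard_def, ncard_def, hI.encard_eq_encard hJ]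

lemma Indep.ncard_le_of_isBasis [Finite α] {I J X : Set α} (hI : M.Indep I) (hIX : I ⊆ X)
    (hJ : M.IsBasis J X) : I.ncard ≤ J.ncard := by
  obtain ⟨K, hK, hIK⟩ := hI.subset_isBasis_of_subset hIX hJ.subset_ground
  exact (ncard_le_ncard hIK).trans (hK.ncard_eq_ncard hJ).le

lemma Indep.isBasis_of_ncard_le [Finite α] {I J X : Set α} (hI : M.Indep I) (hIX : I ⊆ X)
    (hJ : M.IsBasis J X) (hJI : J.ncard ≤ I.ncard) : M.IsBasis I X := by
  obtain ⟨K, hK, hIK⟩ := hI.subset_isBasis_of_subset hIX hJ.subset_ground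
  rwa [eq_of_subset_of_ncard_le hIK ((hK.ncard_eq_ncard hJ).trans_le hJI)]

lemma exists_isBasis_forall_inter_isBasis {n : ℕ} {S : Fin (n + 1) → Set α} (hS : Monotone S)
    (hSE : ∀ i, S i ⊆ M.E) (j : Fin (n + 1)) :
    ∃ I, M.IsBasis I (S j) ∧ ∀ m ≤ j, M.IsBasis (I ∩ S m) (S m) := by
  induction j using Fin.induction with
  | zero =>
    obtain ⟨I, hI⟩ := M.exists_isBasis (S 0) (hSE 0)
    refine ⟨I, hI, fun m hm => ?_⟩
    rwa [Fin.le_zero_iff.1 hm, inter_eq_self_of_subset_left hI.subset]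
  | succ i ih =>
    obtain ⟨I, hI, hIS⟩ := ih
    obtain ⟨J, hJ, hJI⟩ := hI.exists_isBasis_inter_eq_of_superset
      (hS (Fin.castSucc_le_succ i)) (hSE i.succ)
    refine ⟨J, hJ, fun m hm => ?_⟩
    obtain rfl | hlt := hm.eq_or_lt
    · rwa [inter_eq_self_of_subset_left hJ.subset]
    · have hmi : m ≤ i.castSucc := Fin.le_castSucc_iff.2 hlt
      have hJm : J ∩ S m = I ∩ S m := by rw [← hJI, inter_assoc, inter_eq_right.2 (hS hmi)]
      exact hJm ▸ hIS m hmi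

lemma exists_isBase_forall_inter_isBasis {n : ℕ} {S : Fin (n + 1) → Set α} (hS : Monotone S)
    (hSE : ∀ i, S i ⊆ M.E) : ∃ B, M.IsBase B ∧ ∀ m, M.IsBasis (B ∩ S m) (S m) := by
  obtain ⟨I, hI, hIS⟩ := exists_isBasis_forall_inter_isBasis hS hSE (Fin.last n)
  obtain ⟨B, hB, rfl⟩ := hI.exists_isBase
  refine ⟨B, hB, fun m => ?_⟩
  simpa only [inter_assoc, inter_eq_right.2 (hS (Fin.le_last m))] using hIS m (Fin.le_last m)

lemma isBase_restrict_contract_inter_sdiff {B C X : Set α} (hX : M.IsBasis (B ∩ X) X)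
    (hC : M.IsBasis (B ∩ C) C) (hCX : C ⊆ X) : ((M ↾ X) ／ C).IsBase (B ∩ (X \ C)) := by
  have hXE := hX.subset_ground
  have hCX' : (M ↾ X).IsBasis (B ∩ C) C := (isBasis_restrict_iff hXE).2 ⟨hC, hCX⟩
  have hXX' : (M ↾ X).IsBasis (B ∩ X) X := (isBasis_restrict_iff hXE).2 ⟨hX, subset_rfl⟩
  have h := hCX'.contract_sdiff_isBasis_sdiff hXX' (inter_subset_inter_right B hCX)
  rw [hCX'.contract_eq_contract_delete, delete_isBase_iff, contract_ground, restrict_ground_eq]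
  convert h using 1
  · ext j; simp only [mem_inter_iff, mem_sdiff]; tauto
  · ext j; simp only [mem_inter_iff, mem_sdiff]; have := @hCX j; tauto

end Matroid

section BasePolytope

lemma isLinearMap_ite_mem (T : Set α) [DecidablePred (· ∈ T)] :
    IsLinearMap ℝ fun (x : α → ℝ) j => if j ∈ T then x j else 0 :=
  ⟨fun _ _ => by ext j; by_cases hj : j ∈ T <;> simp [hj],
    fun _ _ => by ext j; by_cases hj : j ∈ T <;> simp [hj]⟩

variable [Fintype α]

lemma sum_indicator_eq_ncard (B : Set α) :
    ∑ j, (if j ∈ B then (1 : ℝ) else 0) = B.ncard := by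
  rw [Finset.sum_boole, ncard_eq_toFinset_card']
  congr 2
  ext j
  simp

lemma indicator_mem_basePolytope {M : Matroid α} {B : Set α} (hB : M.IsBase B) :
    (fun j => if j ∈ B then (1 : ℝ) else 0) ∈ basePolytope M :=
  subset_convexHull ℝ _ ⟨B, hB, rfl⟩

lemma sum_eq_ncard_of_mem_basePolytope {M : Matroid α} {B : Set α} (hB : M.IsBase B)
    {x : α → ℝ} (hx : x ∈ basePolytope M) : ∑ j, x j = B.ncard := by
  refine convexHull_min ?_ (convex_hyperplane (f := fun x : α → ℝ => ∑ j, x j) ?_ _) hx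
  · rintro _ ⟨B', hB', rfl⟩
    simp only [mem_ofPred_eq, sum_indicator_eq_ncard, hB'.ncard_eq_ncard_of_isBase hB]
  · exact ⟨fun _ _ => Finset.sum_add_distrib, fun _ _ => (Finset.mul_sum _ _ _).symm⟩

lemma sum_eq_sum_of_mem_basePolytope {M : Matroid α} {x y : α → ℝ} (hx : x ∈ basePolytope M)
    (hy : y ∈ basePolytope M) : ∑ j, x j = ∑ j, y j := by
  obtain ⟨B, hB⟩ := M.exists_isBase
  rw [sum_eq_ncard_of_mem_basePolytope hB hx, sum_eq_ncard_of_mem_basePolytope hB hy]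

lemma indicator_restrict_mem_basePolytope_contract {M : Matroid α} {B C X : Set α}
    (hX : M.IsBasis (B ∩ X) X) (hC : M.IsBasis (B ∩ C) C) (hCX : C ⊆ X) :
    (fun j => if j ∈ X \ C then (if j ∈ B then (1 : ℝ) else 0) else 0)
      ∈ basePolytope ((M ↾ X) ／ C) := by
  convert indicator_mem_basePolytope (Matroid.isBase_restrict_contract_inter_sdiff hX hC hCX)
    using 2 with j
  by_cases hj : j ∈ X \ C <;> simp [hj, and_comm]

end BasePolytope

section ChainWeight

variable [Fintype α] {k : ℕ} {S : Fin (k + 2) → Set α}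

lemma sum_mul_chainWeight (x : α → ℝ) :
    ∑ j, x j * chainWeight S j
      = ∑ i with i ≠ 0 ∧ i ≠ Fin.last (k + 1), ∑ j with j ∈ S i, x j := by
  simp only [chainWeight, Finset.mul_sum, mul_ite, mul_one, mul_zero, Finset.sum_filter]
  rw [Finset.sum_comm]
  simp only [ite_and, Finset.sum_ite_irrel, Finset.sum_const_zero]

lemma sum_indicator_mul_chainWeight (B : Set α) :
    ∑ j, (if j ∈ B then (1 : ℝ) else 0) * chainWeight S j
      = ∑ i with i ≠ 0 ∧ i ≠ Fin.last (k + 1), ((B ∩ S i).ncard : ℝ) := by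
  rw [sum_mul_chainWeight]
  refine Finset.sum_congr rfl fun i _ => ?_
  rw [← sum_indicator_eq_ncard, Finset.sum_filter]
  simp only [← ite_and, mem_inter_iff, and_comm]

/-- `⟨x, chainWeight S⟩` is the sum of the coordinate sums of `x` over the `S i`, and these
telescope into the coordinate sums over the blocks `S (i + 1) \ S i`. -/
lemma sum_mul_chainWeight_congr (hS0 : S 0 = ∅) (hS : Monotone S) {x y : α → ℝ}
    (h : ∀ i : Fin (k + 1), ∑ j, (if j ∈ S i.succ \ S i.castSucc then x j else 0)
      = ∑ j, (if j ∈ S i.succ \ S i.castSucc then y j else 0)) :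
    ∑ j, x j * chainWeight S j = ∑ j, y j * chainWeight S j := by
  have hsplit : ∀ (z : α → ℝ) (i : Fin (k + 1)), ∑ j, (if j ∈ S i.succ then z j else 0)
      = ∑ j, (if j ∈ S i.castSucc then z j else 0)
        + ∑ j, (if j ∈ S i.succ \ S i.castSucc then z j else 0) := fun z i => by
    rw [← Finset.sum_add_distrib]
    refine Finset.sum_congr rfl fun j _ => ?_
    have := @hS _ _ (Fin.castSucc_le_succ i) j
    by_cases h₁ : j ∈ S i.castSucc <;> by_cases h₂ : j ∈ S i.succ <;> simp_all
  have hS' : ∀ m, ∑ j, (if j ∈ S m then x j else 0) = ∑ j, (if j ∈ S m then y j else 0) := by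
    intro m
    induction m using Fin.induction with
    | zero => simp [hS0]
    | succ i ih => rw [hsplit, hsplit, ih, h i]
  simp only [sum_mul_chainWeight, Finset.sum_filter, hS']

variable {M : Matroid α}

lemma sum_indicator_mul_chainWeight_le {B B₀ : Set α} (hB : M.IsBase B)
    (hB₀ : ∀ i, M.IsBasis (B₀ ∩ S i) (S i)) :
    ∑ j, (if j ∈ B then (1 : ℝ) else 0) * chainWeight S j
      ≤ ∑ j, (if j ∈ B₀ then (1 : ℝ) else 0) * chainWeight S j := by
  simp only [sum_indicator_mul_chainWeight]
  exact Finset.sum_le_sum fun i _ => Nat.cast_le.2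
    ((hB.indep.inter_right _).ncard_le_of_isBasis inter_subset_right (hB₀ i))

lemma isBasis_inter_of_sum_indicator_mul_chainWeight_eq (hS0 : S 0 = ∅)
    (hSlast : S (Fin.last (k + 1)) = M.E) {B B₀ : Set α} (hB : M.IsBase B)
    (hB₀ : ∀ i, M.IsBasis (B₀ ∩ S i) (S i))
    (h : ∑ j, (if j ∈ B then (1 : ℝ) else 0) * chainWeight S j
      = ∑ j, (if j ∈ B₀ then (1 : ℝ) else 0) * chainWeight S j) (i : Fin (k + 2)) :
    M.IsBasis (B ∩ S i) (S i) := by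
  have hBi : ∀ i, M.Indep (B ∩ S i) := fun i => hB.indep.inter_right _
  by_cases hi₀ : i = 0
  · simp [hi₀, hS0]
  by_cases hiₗ : i = Fin.last (k + 1)
  · rw [hiₗ, hSlast, inter_eq_self_of_subset_left hB.subset_ground]
    exact hB.isBasis_ground
  simp only [sum_indicator_mul_chainWeight] at h
  have hcard := (Finset.sum_eq_sum_iff_of_le fun i _ => Nat.cast_le.2
    ((hBi i).ncard_le_of_isBasis inter_subset_right (hB₀ i))).1 h i (by simp [hi₀, hiₗ])
  exact (hBi i).isBasis_of_ncard_le inter_subset_right (hB₀ i) (Nat.cast_inj.1 hcard).ge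

end ChainWeight

/-- For a chain `∅ ⊊ S₁ ⊊ ⋯ ⊊ S_k ⊊ E` of nonempty proper subsets and
`w = e_{S₁} + ⋯ + e_{S_k}`, the face of the base polytope `P(M)` maximizing `⟨·, w⟩` is
exactly the set of points of `P(M)` whose restriction to each block `S_{i+1} ∖ S_i` lies in
the base polytope of the minor `M|S_{i+1}/S_i`; i.e. the face is the product
`P(M|S₁) × P(M|S₂/S₁) × ⋯ × P(M/S_k)`. -/
theorem stmt19 [Fintype α] (M : Matroid α) (k : ℕ)
    (S : Fin (k + 2) → Set α) (hS0 : S 0 = ∅) (hSlast : S (Fin.last (k + 1)) = M.E)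
    (hchain : ∀ i : Fin (k + 1), S i.castSucc ⊂ S i.succ) :
    {x ∈ basePolytope M | ∀ y ∈ basePolytope M,
        ∑ j, y j * chainWeight S j ≤ ∑ j, x j * chainWeight S j}
      = {x ∈ basePolytope M | ∀ i : Fin (k + 1),
          (fun j => if j ∈ S i.succ \ S i.castSucc then x j else 0)
            ∈ basePolytope (mcontract (M ↾ S i.succ) (S i.castSucc))} := by
  have hS : Monotone S := (Fin.strictMono_iff_lt_succ.2 hchain).monotone
  obtain ⟨B₀, hB₀, hB₀S⟩ :=
    M.exists_isBase_forall_inter_isBasis hS fun i => hSlast ▸ hS (Fin.le_last i)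
  have hblock : ∀ {B : Set α}, (∀ m, M.IsBasis (B ∩ S m) (S m)) → ∀ i : Fin (k + 1),
      (fun j => if j ∈ S i.succ \ S i.castSucc then (if j ∈ B then (1 : ℝ) else 0) else 0)
        ∈ basePolytope ((M ↾ S i.succ) ／ S i.castSucc) := fun hB i =>
    indicator_restrict_mem_basePolytope_contract (hB _) (hB _) (hS (Fin.castSucc_le_succ i))
  let f : (α → ℝ) →ₗ[ℝ] ℝ := Fintype.linearCombination ℝ (chainWeight S)
  set c := f fun j => if j ∈ B₀ then 1 else 0
  have hf : ∀ v ∈ {v | ∃ B, M.IsBase B ∧ v = fun j => if j ∈ B then (1 : ℝ) else 0}, f v ≤ c := by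
    rintro _ ⟨B, hB, rfl⟩
    exact sum_indicator_mul_chainWeight_le hB hB₀S
  have hle : ∀ y ∈ basePolytope M, f y ≤ c := fun y => f.apply_le_of_mem_convexHull hf
  ext x
  constructor
  · rintro ⟨hx, hmax⟩
    have hface := f.mem_convexHull_setOf_apply_eq hf hx
      ((hle x hx).antisymm (hmax _ (indicator_mem_basePolytope hB₀)))
    refine ⟨hx, fun i => ?_⟩
    refine convexHull_min (t := _ ⁻¹' basePolytope ((M ↾ S i.succ) ／ S i.castSucc)) ?_
      ((convex_convexHull ℝ _).is_linear_preimage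
        (isLinearMap_ite_mem (S i.succ \ S i.castSucc))) hface
    rintro _ ⟨⟨B, hB, rfl⟩, hBc⟩
    exact hblock (isBasis_inter_of_sum_indicator_mul_chainWeight_eq hS0 hSlast hB hB₀S hBc) i
  · rintro ⟨hx, hxS⟩
    have hfx : f x = c := sum_mul_chainWeight_congr hS0 hS fun i =>
      sum_eq_sum_of_mem_basePolytope (hxS i) (hblock hB₀S i)
    exact ⟨hx, fun y hy => (hle y hy).trans hfx.ge⟩
end
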